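/- arXiv:1811.04559 — 8 statements merged into one kernel-verified Lean document; each statement's English description precedes it below -/
import Mathlib

section
/- Let (L₁, ε₁, ∧_{ε₁}, ∨_{ε₁}) and (L₂, ε₂, ∧_{ε₂}, ∨_{ε₂}) be canonical ℰ-lattices and let f : L₁ → L₂ be a map. Then f is an ℰ-lattice isomorphism if and only if: (i) f maps Fix ε₁ into Fix ε₂ and its restriction f₀ : Fix ε₁ → Fix ε₂ is a lattice isomorphism (a bijection preserving the restricted operations ∧ and ∨); and (ii) for each a ∈ Fix ε₁, f maps the class [a] bijectively onto the class [f(a)]. -/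
/-- A canonical ℰ-lattice: a set `L` with a map `eps : L → L` and two associative,
commutative binary operations satisfying `a ∧ a = a ∨ a = ε a`,
the absorption laws `a ∧ (a ∨ b) = a ∨ (a ∧ b) = ε a`, and (canonicity)
all meets and joins are fixed points of `eps`. -/
structure CELattice (L : Type*) where
  eps : L → L
  meet : L → L → L
  join : L → L → L
  meet_assoc : ∀ a b c, meet a (meet b c) = meet (meet a b) c
  join_assoc : ∀ a b c, join a (join b c) = join (join a b) c
  meet_comm : ∀ a b, meet a b = meet b a
  join_comm : ∀ a b, join a b = join b a
  meet_self : ∀ a, meet a a = eps a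
  join_self : ∀ a, join a a = eps a
  meet_absorb : ∀ a b, meet a (join a b) = eps a
  join_absorb : ∀ a b, join a (meet a b) = eps a
  meet_canonical : ∀ a b, eps (meet a b) = meet a b
  join_canonical : ∀ a b, eps (join a b) = join a b

namespace CELattice

variable {L : Type*}

/-- The set of fixed points of `eps`. -/
def Fix (E : CELattice L) : Set L := {a | E.eps a = a}

/-- The class `[a] = {b | ε b = ε a}`. -/
def cls (E : CELattice L) (a : L) : Set L := {b | E.eps b = E.eps a}

/-- The fixed points of `eps`, as a type. -/
abbrev FixT (E : CELattice L) : Type _ := {a : L // E.eps a = a}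

/-- An ℰ-lattice isomorphism: a bijection commuting with `eps` and preserving
meets and joins. -/
def IsEIso {L₁ L₂ : Type*} (E₁ : CELattice L₁) (E₂ : CELattice L₂) (f : L₁ → L₂) : Prop :=
  Function.Bijective f ∧ (∀ a, f (E₁.eps a) = E₂.eps (f a)) ∧
    (∀ a b, f (E₁.meet a b) = E₂.meet (f a) (f b)) ∧
    (∀ a b, f (E₁.join a b) = E₂.join (f a) (f b))

end CELattice

/-!
`L` is the disjoint union of the classes `[e]`, `e ∈ Fix ε`, with `a ∈ [ε a]`, and a map
commuting with `ε` sends `[e]` into `[f e]`; so such a map is bijective exactly when it is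
bijective on `Fix ε` and on every class. Conversely, (i) and (ii) force `f` to commute with `ε`,
since `f a ∈ [f (ε a)]` and `f (ε a)` is fixed. Finally, in a canonical ℰ-lattice
`a ∧ b = ε a ∧ ε b` and `a ∨ b = ε a ∨ ε b`, so meets and joins are determined by their values
on `Fix ε`.
-/

namespace CELattice

section Basic

variable {L : Type*} (E : CELattice L)

instance : Std.Associative E.meet := ⟨fun a b c => (E.meet_assoc a b c).symm⟩
instance : Std.Commutative E.meet := ⟨E.meet_comm⟩
instance : Std.Associative E.join := ⟨fun a b c => (E.join_assoc a b c).symm⟩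
instance : Std.Commutative E.join := ⟨E.join_comm⟩

lemma eps_idem (a : L) : E.eps (E.eps a) = E.eps a := by
  rw [← E.meet_self a, E.meet_canonical]

lemma eps_mem_fix (a : L) : E.eps a ∈ E.Fix := E.eps_idem a

lemma mem_cls_eps (a : L) : a ∈ E.cls (E.eps a) := (E.eps_idem a).symm

lemma meet_eps_eps (a b : L) : E.meet (E.eps a) (E.eps b) = E.meet a b := by
  rw [← E.meet_self a, ← E.meet_self b, ← E.meet_canonical a b, ← E.meet_self (E.meet a b)]
  ac_rfl

lemma join_eps_eps (a b : L) : E.join (E.eps a) (E.eps b) = E.join a b := by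
  rw [← E.join_self a, ← E.join_self b, ← E.join_canonical a b, ← E.join_self (E.join a b)]
  ac_rfl

end Basic

variable {L₁ L₂ : Type*} {E₁ : CELattice L₁} {E₂ : CELattice L₂} {f : L₁ → L₂}

lemma mapsTo_fix_of_map_eps (heps : ∀ a, f (E₁.eps a) = E₂.eps (f a)) :
    Set.MapsTo f E₁.Fix E₂.Fix := fun a (ha : E₁.eps a = a) =>
  show E₂.eps (f a) = f a by rw [← heps, ha]

lemma map_eps_of_mapsTo_cls (hfix : Set.MapsTo f E₁.Fix E₂.Fix)
    (hcls : ∀ e ∈ E₁.Fix, Set.MapsTo f (E₁.cls e) (E₂.cls (f e))) (a : L₁) :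
    f (E₁.eps a) = E₂.eps (f a) := by
  have hfa : E₂.eps (f a) = E₂.eps (f (E₁.eps a)) :=
    hcls _ (E₁.eps_mem_fix a) (E₁.mem_cls_eps a)
  rw [hfa, hfix (E₁.eps_mem_fix a)]

lemma bijective_iff_bijOn_fix_and_cls (heps : ∀ a, f (E₁.eps a) = E₂.eps (f a)) :
    Function.Bijective f ↔
      Set.BijOn f E₁.Fix E₂.Fix ∧ ∀ e ∈ E₁.Fix, Set.BijOn f (E₁.cls e) (E₂.cls (f e)) := by
  constructor
  · rintro ⟨hinj, hsurj⟩
    refine ⟨⟨mapsTo_fix_of_map_eps heps, hinj.injOn, ?_⟩, fun e _ => ⟨?_, hinj.injOn, ?_⟩⟩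
    · intro c hc
      obtain ⟨a, rfl⟩ := hsurj c
      exact ⟨E₁.eps a, E₁.eps_mem_fix a, by rw [heps, hc]⟩
    · intro b (hb : E₁.eps b = E₁.eps e)
      show E₂.eps (f b) = E₂.eps (f e)
      rw [← heps, ← heps, hb]
    · intro c hc
      obtain ⟨b, rfl⟩ := hsurj c
      refine ⟨b, hinj ?_, rfl⟩
      rw [heps, heps]
      exact hc
  · rintro ⟨hfix, hcls⟩
    constructor
    · intro a b hab
      have heq : E₁.eps a = E₁.eps b :=
        hfix.injOn (E₁.eps_mem_fix a) (E₁.eps_mem_fix b) (by rw [heps, heps, hab])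
      have hb : b ∈ E₁.cls (E₁.eps a) := by rw [heq]; exact E₁.mem_cls_eps b
      exact (hcls _ (E₁.eps_mem_fix a)).injOn (E₁.mem_cls_eps a) hb hab
    · intro c
      obtain ⟨e, he, hfe⟩ := hfix.surjOn (E₂.eps_mem_fix c)
      have hc : c ∈ E₂.cls (f e) := by rw [hfe]; exact E₂.mem_cls_eps c
      obtain ⟨a, -, rfl⟩ := (hcls e he).surjOn hc
      exact ⟨a, rfl⟩

lemma map_meet_of_map_meet_fix (heps : ∀ a, f (E₁.eps a) = E₂.eps (f a))
    (hmeet : ∀ a ∈ E₁.Fix, ∀ b ∈ E₁.Fix, f (E₁.meet a b) = E₂.meet (f a) (f b)) (a b : L₁) :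
    f (E₁.meet a b) = E₂.meet (f a) (f b) := by
  rw [← E₁.meet_eps_eps, hmeet _ (E₁.eps_mem_fix a) _ (E₁.eps_mem_fix b), heps, heps,
    E₂.meet_eps_eps]

lemma map_join_of_map_join_fix (heps : ∀ a, f (E₁.eps a) = E₂.eps (f a))
    (hjoin : ∀ a ∈ E₁.Fix, ∀ b ∈ E₁.Fix, f (E₁.join a b) = E₂.join (f a) (f b)) (a b : L₁) :
    f (E₁.join a b) = E₂.join (f a) (f b) := by
  rw [← E₁.join_eps_eps, hjoin _ (E₁.eps_mem_fix a) _ (E₁.eps_mem_fix b), heps, heps,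
    E₂.join_eps_eps]

end CELattice

open CELattice in
theorem eiso_iff_restrictions_general {L₁ L₂ : Type*}
    (E₁ : CELattice L₁) (E₂ : CELattice L₂) (f : L₁ → L₂) :
    IsEIso E₁ E₂ f ↔
      ((Set.MapsTo f E₁.Fix E₂.Fix ∧ Set.BijOn f E₁.Fix E₂.Fix ∧
        (∀ a ∈ E₁.Fix, ∀ b ∈ E₁.Fix, f (E₁.meet a b) = E₂.meet (f a) (f b)) ∧
        (∀ a ∈ E₁.Fix, ∀ b ∈ E₁.Fix, f (E₁.join a b) = E₂.join (f a) (f b))) ∧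
       (∀ a ∈ E₁.Fix, Set.BijOn f (E₁.cls a) (E₂.cls (f a)))) := by
  constructor
  · rintro ⟨hbij, heps, hmeet, hjoin⟩
    obtain ⟨hfix, hcls⟩ := (bijective_iff_bijOn_fix_and_cls heps).1 hbij
    exact ⟨⟨hfix.mapsTo, hfix, fun a _ b _ => hmeet a b, fun a _ b _ => hjoin a b⟩, hcls⟩
  · rintro ⟨⟨-, hfix, hmeet, hjoin⟩, hcls⟩
    have heps := map_eps_of_mapsTo_cls hfix.mapsTo fun e he => (hcls e he).mapsTo
    exact ⟨(bijective_iff_bijOn_fix_and_cls heps).2 ⟨hfix, hcls⟩, heps,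
      map_meet_of_map_meet_fix heps hmeet, map_join_of_map_join_fix heps hjoin⟩

open CELattice in
/-- Proposition 1 (2.1): a map between canonical ℰ-lattices is an ℰ-lattice isomorphism
iff it restricts to a lattice isomorphism `Fix ε₁ → Fix ε₂` and maps each class `[a]`
(`a ∈ Fix ε₁`) bijectively onto `[f a]`. -/
theorem eiso_iff_restrictions {L₁ L₂ : Type*} [Nonempty L₁] [Nonempty L₂]
    (E₁ : CELattice L₁) (E₂ : CELattice L₂) (f : L₁ → L₂) :
    IsEIso E₁ E₂ f ↔
      ((Set.MapsTo f E₁.Fix E₂.Fix ∧ Set.BijOn f E₁.Fix E₂.Fix ∧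
        (∀ a ∈ E₁.Fix, ∀ b ∈ E₁.Fix, f (E₁.meet a b) = E₂.meet (f a) (f b)) ∧
        (∀ a ∈ E₁.Fix, ∀ b ∈ E₁.Fix, f (E₁.join a b) = E₂.join (f a) (f b))) ∧
       (∀ a ∈ E₁.Fix, Set.BijOn f (E₁.cls a) (E₂.cls (f a)))) :=
  eiso_iff_restrictions_general E₁ E₂ f
end

section
/- Let G₁ and G₂ be groups and f : L(G₁) → L(G₂) an ℰL-isomorphism. Then f maps normal subgroups of G₁ to normal subgroups of G₂ and its restriction to N(G₁) is a lattice isomorphism from the lattice N(G₁) of normal subgroups of G₁ onto the lattice N(G₂) of normal subgroups of G₂. -/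
/-! Normal subgroups are exactly the subgroups equal to their normal core. Since an
ℰL-isomorphism `f` is injective and commutes with normal cores, `H_G = H` holds iff
`f(H)_G = f(H)`, so `f` preserves and reflects normality; on normal subgroups the ℰ-lattice
operations `H_G ∩ K_G` and `H_G K_G` are the ordinary meet and join. -/

/-- An ℰL-isomorphism from a group `G₁` to a group `G₂`: a bijection between the subgroup
lattices which commutes with taking normal cores and preserves the ℰ-lattice meet
`H ∧ K = H_G ∩ K_G` and join `H ∨ K = H_G K_G` (the join of the two normal cores). -/
def IsELIso {G₁ G₂ : Type*} [Group G₁] [Group G₂] (f : Subgroup G₁ → Subgroup G₂) : Prop :=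
  Function.Bijective f ∧
    (∀ H : Subgroup G₁, f H.normalCore = (f H).normalCore) ∧
    (∀ H K : Subgroup G₁,
      f (H.normalCore ⊓ K.normalCore) = (f H).normalCore ⊓ (f K).normalCore) ∧
    (∀ H K : Subgroup G₁,
      f (H.normalCore ⊔ K.normalCore) = (f H).normalCore ⊔ (f K).normalCore)

theorem Subgroup.normal_iff_normalCore_eq {G : Type*} [Group G] {H : Subgroup G} :
    H.Normal ↔ H.normalCore = H :=
  ⟨fun _ => H.normalCore_eq_self, fun h => h ▸ H.normalCore_normal⟩

namespace IsELIso

variable {G₁ G₂ : Type*} [Group G₁] [Group G₂] {f : Subgroup G₁ → Subgroup G₂}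

theorem normal_map_iff (hf : IsELIso f) {H : Subgroup G₁} : (f H).Normal ↔ H.Normal := by
  rw [Subgroup.normal_iff_normalCore_eq, Subgroup.normal_iff_normalCore_eq, ← hf.2.1,
    hf.1.1.eq_iff]

theorem bijOn_normal (hf : IsELIso f) :
    Set.BijOn f {H : Subgroup G₁ | H.Normal} {H : Subgroup G₂ | H.Normal} := by
  refine ⟨fun H hH => hf.normal_map_iff.2 hH, hf.1.1.injOn, fun K hK => ?_⟩
  obtain ⟨H, rfl⟩ := hf.1.2 K
  exact ⟨H, hf.normal_map_iff.1 hK, rfl⟩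

theorem map_inf_of_normal (hf : IsELIso f) {H K : Subgroup G₁} (hH : H.Normal)
    (hK : K.Normal) : f (H ⊓ K) = f H ⊓ f K := by
  have := hf.normal_map_iff.2 hH
  have := hf.normal_map_iff.2 hK
  simpa only [Subgroup.normalCore_eq_self] using hf.2.2.1 H K

theorem map_sup_of_normal (hf : IsELIso f) {H K : Subgroup G₁} (hH : H.Normal)
    (hK : K.Normal) : f (H ⊔ K) = f H ⊔ f K := by
  have := hf.normal_map_iff.2 hH
  have := hf.normal_map_iff.2 hK
  simpa only [Subgroup.normalCore_eq_self] using hf.2.2.2 H K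

end IsELIso

/-- An ℰL-isomorphism maps normal subgroups to normal subgroups and restricts to a
lattice isomorphism `N(G₁) → N(G₂)` between the lattices of normal subgroups. -/
theorem eliso_normal_restriction {G₁ G₂ : Type*} [Group G₁] [Group G₂]
    (f : Subgroup G₁ → Subgroup G₂) (hf : IsELIso f) :
    (∀ H : Subgroup G₁, H.Normal → (f H).Normal) ∧
    Set.BijOn f {H : Subgroup G₁ | H.Normal} {H : Subgroup G₂ | H.Normal} ∧
    (∀ H K : Subgroup G₁, H.Normal → K.Normal → f (H ⊓ K) = f H ⊓ f K) ∧
    (∀ H K : Subgroup G₁, H.Normal → K.Normal → f (H ⊔ K) = f H ⊔ f K) :=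
  ⟨fun _ hH => hf.normal_map_iff.2 hH, hf.bijOn_normal,
    fun _ _ => hf.map_inf_of_normal, fun _ _ => hf.map_sup_of_normal⟩
end

section
/- Let G₁ and G₂ be groups and suppose there exists an ℰL-isomorphism f : L(G₁) → L(G₂). If G₁ is a Dedekind group, then G₂ is a Dedekind group. In particular, if G₁ is abelian then G₂ is Dedekind. -/
section

variable {G₁ G₂ : Type*} [Group G₁] [Group G₂]

theorem Subgroup.normal_of_forall_mul_comm (hcomm : ∀ a b : G₁, a * b = b * a)
    (H : Subgroup G₁) : H.Normal :=
  haveI := isMulCommutative_iff.mpr hcomm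
  inferInstance

theorem normal_apply_of_map_normalCore {f : Subgroup G₁ → Subgroup G₂}
    (hcore : ∀ H : Subgroup G₁, f H.normalCore = (f H).normalCore)
    (H : Subgroup G₁) [H.Normal] : (f H).Normal := by
  have hfix : (f H).normalCore = f H := by rw [← hcore, H.normalCore_eq_self]
  exact hfix ▸ (f H).normalCore_normal

theorem normal_of_surjective_of_map_normalCore {f : Subgroup G₁ → Subgroup G₂}
    (hsurj : Function.Surjective f)
    (hcore : ∀ H : Subgroup G₁, f H.normalCore = (f H).normalCore)
    (hded : ∀ H : Subgroup G₁, H.Normal) (K : Subgroup G₂) : K.Normal := by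
  obtain ⟨H, rfl⟩ := hsurj K
  have := hded H
  exact normal_apply_of_map_normalCore hcore H

end

/-- Proposition 1 (2.2), Dedekind case: if `G₁` and `G₂` are ℰL-isomorphic and `G₁` is a
Dedekind group (i.e. all its subgroups are normal), then `G₂` is Dedekind; in particular,
if `G₁` is abelian then `G₂` is Dedekind. -/
theorem dedekind_of_eliso {G₁ G₂ : Type*} [Group G₁] [Group G₂]
    (hf : ∃ f : Subgroup G₁ → Subgroup G₂, IsELIso f) :
    ((∀ H : Subgroup G₁, H.Normal) → ∀ H : Subgroup G₂, H.Normal) ∧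
    ((∀ a b : G₁, a * b = b * a) → ∀ H : Subgroup G₂, H.Normal) := by
  obtain ⟨f, ⟨-, hsurj⟩, hcore, -⟩ := hf
  have hded := normal_of_surjective_of_map_normalCore hsurj hcore
  exact ⟨hded, fun hcomm => hded (Subgroup.normal_of_forall_mul_comm hcomm)⟩
end

section
/- Let G₁ and G₂ be groups, f : L(G₁) → L(G₂) an ℰL-isomorphism, and H₁ a normal subgroup of G₁. Then f(H₁) is a normal subgroup of G₂, f maps each subgroup of G₁ containing H₁ to a subgroup of G₂ containing f(H₁), and the induced map f̄ : L(G₁/H₁) → L(G₂/f(H₁)), defined by f̄(K₁/H₁) = f(K₁)/f(H₁) for every subgroup K₁ of G₁ containing H₁, is an ℰL-isomorphism from G₁/H₁ to G₂/f(H₁). -/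
namespace Subgroup

variable {G G' : Type*} [Group G] [Group G'] {φ : G →* G'}

theorem normalCore_comap_of_surjective (hφ : Function.Surjective φ) (Q : Subgroup G') :
    (Q.comap φ).normalCore = Q.normalCore.comap φ := by
  apply le_antisymm
  · have : ((Q.comap φ).normalCore.map φ).Normal := (normalCore_normal _).map φ hφ
    exact map_le_iff_le_comap.mp <| normal_le_normalCore.mpr <|
      map_le_iff_le_comap.mpr (normalCore_le _)
  · exact normal_le_normalCore.mpr (comap_mono Q.normalCore_le)

theorem normalCore_map_of_ker_le (hφ : Function.Surjective φ) {K : Subgroup G}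
    (hK : φ.ker ≤ K) : (K.map φ).normalCore = K.normalCore.map φ := by
  conv_rhs => rw [← comap_map_eq_self hK]
  rw [normalCore_comap_of_surjective hφ, map_comap_eq_self_of_surjective hφ]

theorem map_inf_of_ker_le {A : Subgroup G} (B : Subgroup G) (hA : φ.ker ≤ A) :
    (A ⊓ B).map φ = A.map φ ⊓ B.map φ := by
  refine le_antisymm (map_inf_le A B φ) ?_
  rintro _ ⟨⟨a, ha, rfl⟩, b, hb, hba⟩
  have hab : a⁻¹ * b ∈ A := hA (by simp [MonoidHom.mem_ker, hba])
  exact ⟨b, ⟨by simpa using A.mul_mem ha hab, hb⟩, hba⟩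

end Subgroup

open Subgroup

namespace IsELIso

variable {G₁ G₂ : Type*} [Group G₁] [Group G₂] {f : Subgroup G₁ → Subgroup G₂}

theorem apply_eq_normalCore_of_normal (hf : IsELIso f) (N : Subgroup G₁) [N.Normal] :
    f N = (f N).normalCore := by
  rw [← hf.2.1, N.normalCore_eq_self]

theorem normal_apply (hf : IsELIso f) (N : Subgroup G₁) [N.Normal] : (f N).Normal :=
  hf.apply_eq_normalCore_of_normal N ▸ normalCore_normal _

theorem apply_le_apply_iff_of_normal (hf : IsELIso f) (N : Subgroup G₁) [N.Normal]
    (K : Subgroup G₁) : f N ≤ f K ↔ N ≤ K := by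
  have := hf.normal_apply N
  have hmeet : f (N ⊓ K.normalCore) = f N ⊓ (f K).normalCore := by
    simpa [N.normalCore_eq_self, (f N).normalCore_eq_self] using hf.2.2.1 N K
  calc f N ≤ f K ↔ f N ⊓ (f K).normalCore = f N := by rw [inf_eq_left, normal_le_normalCore]
    _ ↔ f (N ⊓ K.normalCore) = f N := by rw [hmeet]
    _ ↔ N ⊓ K.normalCore = N := hf.1.injective.eq_iff
    _ ↔ N ≤ K := by rw [inf_eq_left, normal_le_normalCore]

end IsELIso

section Induced

variable {G₁ G₂ Q₁ Q₂ : Type*} [Group G₁] [Group G₂] [Group Q₁] [Group Q₂]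

/-- `f̄ = φ₂ ∘ f ∘ φ₁⁻¹` on subgroups; for quotient maps this is `K/N ↦ f K / f N`. -/
def inducedSubgroupMap (f : Subgroup G₁ → Subgroup G₂) (φ₁ : G₁ →* Q₁) (φ₂ : G₂ →* Q₂) :
    Subgroup Q₁ → Subgroup Q₂ :=
  fun Q => (f (Q.comap φ₁)).map φ₂

variable {f : Subgroup G₁ → Subgroup G₂} {φ₁ : G₁ →* Q₁} {φ₂ : G₂ →* Q₂}

theorem inducedSubgroupMap_map {K : Subgroup G₁} (hK : φ₁.ker ≤ K) :
    inducedSubgroupMap f φ₁ φ₂ (K.map φ₁) = (f K).map φ₂ := by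
  rw [inducedSubgroupMap, comap_map_eq_self hK]

namespace IsELIso

variable (hf : IsELIso f) (hφ₁ : Function.Surjective φ₁) (hφ₂ : Function.Surjective φ₂)
  (hker : φ₂.ker = f φ₁.ker)
include hf hker

theorem ker_le_apply_comap (Q : Subgroup Q₁) : φ₂.ker ≤ f (Q.comap φ₁) :=
  hker ▸ (hf.apply_le_apply_iff_of_normal _ _).mpr (φ₁.ker_le_comap Q)

theorem ker_le_normalCore_apply_comap (Q : Subgroup Q₁) :
    φ₂.ker ≤ (f (Q.comap φ₁)).normalCore :=
  normal_le_normalCore.mpr (hf.ker_le_apply_comap hker Q)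

include hφ₁ hφ₂

theorem inducedSubgroupMap_normalCore (Q : Subgroup Q₁) :
    inducedSubgroupMap f φ₁ φ₂ Q.normalCore = (inducedSubgroupMap f φ₁ φ₂ Q).normalCore := by
  rw [inducedSubgroupMap, inducedSubgroupMap, ← normalCore_comap_of_surjective hφ₁, hf.2.1,
    normalCore_map_of_ker_le hφ₂ (hf.ker_le_apply_comap hker Q)]

theorem inducedSubgroupMap_isELIso : IsELIso (inducedSubgroupMap f φ₁ φ₂) := by
  have hcore := hf.inducedSubgroupMap_normalCore hφ₁ hφ₂ hker
  refine ⟨⟨?injective, ?surjective⟩, hcore, fun Q R => ?inf, fun Q R => ?sup⟩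
  case injective =>
    intro Q R hQR
    exact comap_injective hφ₁ <| hf.1.injective <| map_injective_of_ker_le φ₂
      (hf.ker_le_apply_comap hker Q) (hf.ker_le_apply_comap hker R) hQR
  case surjective =>
    intro R
    obtain ⟨K, hK⟩ := hf.1.surjective (R.comap φ₂)
    have hker_le : φ₁.ker ≤ K := by
      rw [← hf.apply_le_apply_iff_of_normal, hK, ← hker]
      exact φ₂.ker_le_comap R
    exact ⟨K.map φ₁, by rw [inducedSubgroupMap_map hker_le, hK,
      map_comap_eq_self_of_surjective hφ₂]⟩
  case inf =>
    rw [inducedSubgroupMap, comap_inf, ← normalCore_comap_of_surjective hφ₁,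
      ← normalCore_comap_of_surjective hφ₁, hf.2.2.1,
      map_inf_of_ker_le _ (hf.ker_le_normalCore_apply_comap hker Q),
      ← normalCore_map_of_ker_le hφ₂ (hf.ker_le_apply_comap hker Q),
      ← normalCore_map_of_ker_le hφ₂ (hf.ker_le_apply_comap hker R)]
    rfl
  case sup =>
    rw [inducedSubgroupMap, ← comap_sup_eq _ _ _ hφ₁, ← normalCore_comap_of_surjective hφ₁,
      ← normalCore_comap_of_surjective hφ₁, hf.2.2.2, Subgroup.map_sup,
      ← normalCore_map_of_ker_le hφ₂ (hf.ker_le_apply_comap hker Q),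
      ← normalCore_map_of_ker_le hφ₂ (hf.ker_le_apply_comap hker R)]
    rfl

end IsELIso

end Induced

/-- Lemma (2.2): if `f : L(G₁) → L(G₂)` is an ℰL-isomorphism and `H₁ ⊴ G₁`, then `f H₁`
is normal in `G₂`, `f` maps subgroups containing `H₁` to subgroups containing `f H₁`, and
the induced map `f̄ : L(G₁/H₁) → L(G₂/f H₁)`, `f̄(K₁/H₁) = f(K₁)/f(H₁)`, is an
ℰL-isomorphism. -/
theorem eliso_quotient {G₁ G₂ : Type*} [Group G₁] [Group G₂]
    (f : Subgroup G₁ → Subgroup G₂) (hf : IsELIso f)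
    (H₁ : Subgroup G₁) [hH₁ : H₁.Normal] :
    ∃ hn : (f H₁).Normal,
      (∀ K : Subgroup G₁, H₁ ≤ K → f H₁ ≤ f K) ∧
      letI : (f H₁).Normal := hn
      ∃ fbar : Subgroup (G₁ ⧸ H₁) → Subgroup (G₂ ⧸ f H₁),
        (∀ K₁ : Subgroup G₁, H₁ ≤ K₁ →
          fbar (K₁.map (QuotientGroup.mk' H₁)) = (f K₁).map (QuotientGroup.mk' (f H₁))) ∧
        IsELIso fbar := by
  have hn := hf.normal_apply H₁
  refine ⟨hn, fun K hK => (hf.apply_le_apply_iff_of_normal H₁ K).mpr hK, ?_⟩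
  have hker : (QuotientGroup.mk' (f H₁)).ker = f (QuotientGroup.mk' H₁).ker := by
    rw [QuotientGroup.ker_mk', QuotientGroup.ker_mk']
  refine ⟨inducedSubgroupMap f (QuotientGroup.mk' H₁) (QuotientGroup.mk' (f H₁)),
    fun K hK => inducedSubgroupMap_map (by rwa [QuotientGroup.ker_mk']), ?_⟩
  exact hf.inducedSubgroupMap_isELIso (QuotientGroup.mk'_surjective _)
    (QuotientGroup.mk'_surjective _) hker
end

section
/- Let G₁ and G₂ be groups, D(G₁) and D(G₂) their derived (commutator) subgroups, and f : L(G₁) → L(G₂) an ℰL-isomorphism. Assume that G₂ satisfies the condition (*): for every normal subgroup N of G₂, if the quotient G₂/N is hamiltonian, then G₂/N is a p-group for some prime p. Then f(D(G₁)) ⊇ D(G₂). -/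
/-- The condition (*): every hamiltonian quotient of `G` (a nonabelian quotient all of
whose subgroups are normal) is a `p`-group for some prime `p`. -/
def CondStar (G : Type*) [Group G] : Prop :=
  ∀ (N : Subgroup G) [N.Normal],
    ((∀ H : Subgroup (G ⧸ N), H.Normal) ∧ ¬ (∀ a b : G ⧸ N, a * b = b * a)) →
      ∃ p : ℕ, p.Prime ∧ IsPGroup p (G ⧸ N)

/-!
An ℰL-isomorphism respects the inclusions `N ≤ H` with `N` normal, and every subgroup above a
derived subgroup is normal, so `f` induces a lattice isomorphism
`L(G₁ ⧸ D(G₁)) ≃ L(G₂ ⧸ f(D(G₁)))`. As `f` also preserves normality, every subgroup of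
`Q := G₂ ⧸ f(D(G₁))` is normal, and `D(G₂) ≤ f(D(G₁))` says that `Q` is abelian.

If `Q` were not abelian, it would be a hamiltonian `p`-group by (*). A noncommuting pair `a, b`
with `|a| + |b|` minimal then satisfies `a² = b² = ⁅a, b⁆`, `⁅a, b⁆² = 1`: it generates a copy of
`Q₈`, whose subgroup `⟨⁅a, b⁆⟩` lies in every nontrivial subgroup of `⟨a, b⟩` while `⟨a⟩` and `⟨b⟩`
are incomparable. In an abelian group no such configuration exists: if all nontrivial subgroups
of `T` contain a subgroup of prime order `p`, the elements of `T` of exponent `p` form a cyclic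
group, and induction on orders through `x ↦ xᵖ` shows that any two cyclic subgroups of `T` are
comparable. Transporting the configuration along the lattice isomorphism into the abelian group
`G₁ ⧸ D(G₁)` gives the contradiction.
-/

section

open Subgroup
open scoped commutatorElement

variable {G : Type*} [Group G]

section OrderOfElement

lemma zpowers_eq_zpowers_of_prime_orderOf {w c : G} (hw : (orderOf w).Prime)
    (hc : c ∈ zpowers w) (hc1 : c ≠ 1) : zpowers c = zpowers w := by
  have : Finite (zpowers w) := Nat.finite_of_card_ne_zero (by simpa using hw.ne_zero)
  refine eq_of_le_of_card_ge (zpowers_le.mpr hc) ?_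
  rw [Nat.card_zpowers, Nat.card_zpowers]
  rcases hw.eq_one_or_self_of_dvd _ (orderOf_dvd_of_mem_zpowers hc) with h | h
  · exact absurd (orderOf_eq_one_iff.mp h) hc1
  · exact h.ge

lemma mem_zpowers_pow_orderOf_div {x v : G} {p : ℕ} (hp : p ≠ 0) (hpx : p ∣ orderOf x)
    (hv : v ∈ zpowers x) (hvp : v ^ p = 1) : v ∈ zpowers (x ^ (orderOf x / p)) := by
  obtain ⟨k, rfl⟩ := mem_zpowers_iff.mp hv
  obtain ⟨q, hq⟩ := hpx
  have hdvd : ((p * q : ℕ) : ℤ) ∣ k * p := by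
    rw [← hq, orderOf_dvd_iff_zpow_eq_one, zpow_mul, zpow_natCast, hvp]
  obtain ⟨m, rfl⟩ : (q : ℤ) ∣ k := by
    push_cast at hdvd
    rw [mul_comm k] at hdvd
    exact (mul_dvd_mul_iff_left (by exact_mod_cast hp)).mp hdvd
  rw [hq, Nat.mul_div_cancel_left _ (Nat.pos_of_ne_zero hp)]
  exact mem_zpowers_iff.mpr ⟨m, by rw [← zpow_natCast, ← zpow_mul]⟩

lemma commutatorElement_zpow_left {a b : G} (h : Commute a ⁅a, b⁆) (i : ℤ) :
    ⁅a ^ i, b⁆ = ⁅a, b⁆ ^ i := by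
  have hinv : ⁅a⁻¹, b⁆ = ⁅a, b⁆⁻¹ := by
    calc ⁅a⁻¹, b⁆ = a⁻¹ * ⁅a, b⁆⁻¹ * a := by simp only [commutatorElement_def]; group
      _ = ⁅a, b⁆⁻¹ := by rw [h.inv_inv.eq]; group
  induction i using Int.induction_on with
  | zero => simp
  | succ i ih =>
    calc ⁅a ^ ((i : ℤ) + 1), b⁆ = a * ⁅a ^ (i : ℤ), b⁆ * a⁻¹ * ⁅a, b⁆ := by
          simp only [commutatorElement_def]; group
      _ = ⁅a, b⁆ ^ ((i : ℤ) + 1) := by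
          rw [ih, (h.zpow_right i).eq, zpow_add_one]; group
  | pred i ih =>
    calc ⁅a ^ (-(i : ℤ) - 1), b⁆ = a⁻¹ * ⁅a ^ (-(i : ℤ)), b⁆ * a * ⁅a⁻¹, b⁆ := by
          simp only [commutatorElement_def]; group
      _ = ⁅a, b⁆ ^ (-(i : ℤ) - 1) := by
          rw [ih, hinv, (h.inv_left.zpow_right _).eq, zpow_sub_one]; group

lemma commutatorElement_zpow_right {a b : G} (h : Commute b ⁅a, b⁆) (j : ℤ) :
    ⁅a, b ^ j⁆ = ⁅a, b⁆ ^ j := by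
  have h' : Commute b ⁅b, a⁆ := by rw [← commutatorElement_inv]; exact h.inv_right
  rw [← commutatorElement_inv, commutatorElement_zpow_left h', ← commutatorElement_inv, inv_zpow,
    inv_inv]

lemma commutatorElement_pow_left {a b : G} (h : Commute a ⁅a, b⁆) (n : ℕ) :
    ⁅a ^ n, b⁆ = ⁅a, b⁆ ^ n := by
  simpa using commutatorElement_zpow_left h n

lemma mul_pow_eq_commutatorElement_pow_mul {x y : G} (hx : Commute x ⁅y, x⁆)
    (hy : Commute y ⁅y, x⁆) (n : ℕ) :
    (x * y) ^ n = ⁅y, x⁆ ^ n.choose 2 * x ^ n * y ^ n := by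
  induction n with
  | zero => simp
  | succ n ih =>
    have hyn : y ^ n * x = ⁅y, x⁆ ^ n * x * y ^ n := by
      rw [← commutatorElement_pow_left hy, commutatorElement_def]; group
    have hcomm : x ^ n * ⁅y, x⁆ ^ n = ⁅y, x⁆ ^ n * x ^ n := ((hx.pow_right n).pow_left n).eq
    calc (x * y) ^ (n + 1) = ⁅y, x⁆ ^ n.choose 2 * (x ^ n * (y ^ n * x)) * y := by
          rw [pow_succ, ih]; group
      _ = ⁅y, x⁆ ^ n.choose 2 * (⁅y, x⁆ ^ n * x ^ n) * x * y ^ n * y := by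
          rw [hyn, ← hcomm]; group
      _ = ⁅y, x⁆ ^ (n + 1).choose 2 * x ^ (n + 1) * y ^ (n + 1) := by
          rw [Nat.choose_succ_succ, Nat.choose_one_right]; group

lemma eq_of_mem_zpowers_of_orderOf_eq_two {x y : G} (hy : orderOf y = 2) (hx : x ∈ zpowers y)
    (hx1 : x ≠ 1) : x = y := by
  classical
  rw [(orderOf_pos_iff.mp (by omega)).mem_zpowers_iff_mem_range_orderOf, hy] at hx
  simp only [Finset.mem_image, Finset.mem_range] at hx
  obtain ⟨k, hk, rfl⟩ := hx
  interval_cases k <;> simp_all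

lemma commute_of_mem_zpowers {x y : G} (h : y ∈ zpowers x) : Commute x y := by
  obtain ⟨k, rfl⟩ := mem_zpowers_iff.mp h
  exact (Commute.refl x).zpow_right k

lemma IsPGroup.exists_orderOf_eq_pow_succ {p : ℕ} [Fact p.Prime] (hG : IsPGroup p G) {g : G}
    (hg : g ≠ 1) : ∃ k, orderOf g = p ^ (k + 1) := by
  obtain ⟨k, hk⟩ := IsPGroup.iff_orderOf.mp hG g
  rcases k with _ | k
  · exact absurd (orderOf_eq_one_iff.mp (by simpa using hk)) hg
  · exact ⟨k, hk⟩

end OrderOfElement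

lemma OrderIso.isLeast_map {α β : Type*} [PartialOrder α] [OrderBot α] [PartialOrder β]
    [OrderBot β] (e : α ≃o β) {t z : α} (h : IsLeast {w | w ≤ t ∧ w ≠ ⊥} z) :
    IsLeast {w | w ≤ e t ∧ w ≠ ⊥} (e z) := by
  refine ⟨⟨e.monotone h.1.1, by simpa using h.1.2⟩, fun w hw => ?_⟩
  rw [← e.apply_symm_apply w]
  exact e.monotone (h.2 ⟨e.symm_apply_le.mpr hw.1, by simpa using hw.2⟩)

section LeastNontrivial

variable {T Z : Subgroup G}

lemma zpowers_le_of_isLeast (hZ : IsLeast {W | W ≤ T ∧ W ≠ ⊥} Z) {w : G} (hw : w ∈ T)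
    (hw1 : w ≠ 1) : Z ≤ zpowers w :=
  hZ.2 ⟨zpowers_le.mpr hw, zpowers_ne_bot.mpr hw1⟩

lemma exists_prime_orderOf_of_isLeast (hZ : IsLeast {W | W ≤ T ∧ W ≠ ⊥} Z) :
    ∃ z, (orderOf z).Prime ∧ Z = zpowers z := by
  obtain ⟨z, hzZ, hz1⟩ := Z.bot_or_exists_ne_one.resolve_left hZ.1.2
  have hfin : IsOfFinOrder z := by
    by_cases hz2 : z ^ 2 = 1
    · exact isOfFinOrder_iff_pow_eq_one.mpr ⟨2, two_pos, hz2⟩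
    obtain ⟨m, hm⟩ := mem_zpowers_iff.mp (zpowers_le_of_isLeast hZ (pow_mem (hZ.1.1 hzZ) 2) hz2 hzZ)
    refine isOfFinOrder_iff_zpow_eq_one.mpr ⟨2 * m - 1, by omega, ?_⟩
    rw [zpow_sub_one, zpow_mul, zpow_ofNat, hm, mul_inv_cancel]
  have hq : (orderOf z).minFac.Prime := Nat.minFac_prime (mt orderOf_eq_one_iff.mp hz1)
  have hz₀ : orderOf (z ^ (orderOf z / (orderOf z).minFac)) = (orderOf z).minFac :=
    orderOf_pow_orderOf_div hfin.orderOf_pos.ne' (Nat.minFac_dvd _)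
  have hz₀Z : z ^ (orderOf z / (orderOf z).minFac) ∈ Z := pow_mem hzZ _
  have hz₀1 : z ^ (orderOf z / (orderOf z).minFac) ≠ 1 := by
    rw [Ne, ← orderOf_eq_one_iff, hz₀]
    exact hq.ne_one
  exact ⟨_, by rwa [hz₀], le_antisymm (zpowers_le_of_isLeast hZ (hZ.1.1 hz₀Z) hz₀1)
    (zpowers_le.mpr hz₀Z)⟩

variable {z : G}

lemma mem_zpowers_of_pow_orderOf_eq_one (hZ : IsLeast {W | W ≤ T ∧ W ≠ ⊥} (zpowers z))
    (hz : (orderOf z).Prime) {u : G} (hu : u ∈ T) (hup : u ^ orderOf z = 1) :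
    u ∈ zpowers z := by
  rcases eq_or_ne u 1 with rfl | hu1
  · exact one_mem _
  have hzu : z ∈ zpowers u := zpowers_le_of_isLeast hZ hu hu1 (mem_zpowers z)
  have horder : orderOf u = orderOf z := (hz.eq_one_or_self_of_dvd _
    (orderOf_dvd_of_pow_eq_one hup)).resolve_left (mt orderOf_eq_one_iff.mp hu1)
  rw [zpowers_eq_zpowers_of_prime_orderOf (horder ▸ hz) hzu
    (mt orderOf_eq_one_iff.mpr hz.ne_one)]
  exact mem_zpowers u

lemma orderOf_pow_lt_of_isLeast (hZ : IsLeast {W | W ≤ T ∧ W ≠ ⊥} (zpowers z))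
    (hz : (orderOf z).Prime) {x : G} (hx : x ∈ T) (hx1 : x ≠ 1) :
    orderOf (x ^ orderOf z) < orderOf x := by
  have hzx : z ∈ zpowers x := zpowers_le_of_isLeast hZ hx hx1 (mem_zpowers z)
  have hfin : IsOfFinOrder x := by
    obtain ⟨e, he⟩ := mem_zpowers_iff.mp hzx
    refine isOfFinOrder_iff_zpow_eq_one.mpr ⟨e * orderOf z, ?_, ?_⟩
    · exact mul_ne_zero (by rintro rfl; exact hz.ne_one (by simp [← he]))
        (by exact_mod_cast hz.ne_zero)
    · rw [zpow_mul, he, zpow_natCast, pow_orderOf_eq_one]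
  rw [orderOf_pow_of_dvd hz.ne_zero (orderOf_dvd_of_mem_zpowers hzx)]
  exact Nat.div_lt_self hfin.orderOf_pos hz.one_lt

lemma mem_zpowers_of_pow_mem_zpowers_pow [IsMulCommutative G]
    (hZ : IsLeast {W | W ≤ T ∧ W ≠ ⊥} (zpowers z)) (hz : (orderOf z).Prime) {x y : G} (hx : x ∈ T)
    (hy : y ∈ T) (hy1 : y ≠ 1) (h : x ^ orderOf z ∈ zpowers (y ^ orderOf z)) :
    x ∈ zpowers y := by
  obtain ⟨k, hk⟩ := mem_zpowers_iff.mp h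
  have hxy : x * (y ^ k)⁻¹ ∈ zpowers z := by
    refine mem_zpowers_of_pow_orderOf_eq_one hZ hz (mul_mem hx (inv_mem (zpow_mem hy k))) ?_
    have hcomm : Commute x (y ^ k)⁻¹ := mul_comm' _ _
    rw [hcomm.mul_pow, inv_pow, ← zpow_natCast (y ^ k), zpow_comm, zpow_natCast, hk,
      mul_inv_cancel]
  simpa using mul_mem (zpowers_le_of_isLeast hZ hy hy1 hxy) (zpow_mem (mem_zpowers y) k)

lemma mem_zpowers_or_mem_zpowers_of_isLeast [IsMulCommutative G]
    (hZ : IsLeast {W | W ≤ T ∧ W ≠ ⊥} (zpowers z)) (hz : (orderOf z).Prime) {x y : G} (hx : x ∈ T)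
    (hy : y ∈ T) : x ∈ zpowers y ∨ y ∈ zpowers x := by
  induction hn : orderOf x + orderOf y using Nat.strong_induction_on generalizing x y with
  | _ n ih =>
  rcases eq_or_ne x 1 with rfl | hx1
  · exact Or.inl (one_mem _)
  rcases eq_or_ne y 1 with rfl | hy1
  · exact Or.inr (one_mem _)
  have hlt : orderOf (x ^ orderOf z) + orderOf (y ^ orderOf z) < n := hn ▸
    add_lt_add (orderOf_pow_lt_of_isLeast hZ hz hx hx1) (orderOf_pow_lt_of_isLeast hZ hz hy hy1)
  rcases ih _ hlt (pow_mem hx _) (pow_mem hy _) rfl with h | h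
  · exact Or.inl (mem_zpowers_of_pow_mem_zpowers_pow hZ hz hx hy hy1 h)
  · exact Or.inr (mem_zpowers_of_pow_mem_zpowers_pow hZ hz hy hx hx1 h)

lemma isChain_Iic_of_isLeast [IsMulCommutative G] (hZ : IsLeast {W | W ≤ T ∧ W ≠ ⊥} Z) :
    IsChain (· ≤ ·) (Set.Iic T) := by
  obtain ⟨z, hz, rfl⟩ := exists_prime_orderOf_of_isLeast hZ
  intro X hX Y hY _
  by_contra! h
  obtain ⟨x, hxX, hxY⟩ := SetLike.not_le_iff_exists.mp h.1
  obtain ⟨y, hyY, hyX⟩ := SetLike.not_le_iff_exists.mp h.2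
  rcases mem_zpowers_or_mem_zpowers_of_isLeast hZ hz (hX hxX) (hY hyY) with hxy | hyx
  · exact hxY (zpowers_le.mpr hyY hxy)
  · exact hyX (zpowers_le.mpr hxX hyx)

end LeastNontrivial

section Dedekind

lemma commutatorElement_mem_zpowers_left (hded : ∀ H : Subgroup G, H.Normal) (a b : G) :
    ⁅a, b⁆ ∈ zpowers a := by
  rw [commutatorElement_def, mul_assoc, mul_assoc, ← mul_assoc b]
  exact mul_mem (mem_zpowers a) ((hded _).conj_mem _ (inv_mem (mem_zpowers a)) b)

lemma commutatorElement_mem_zpowers_right (hded : ∀ H : Subgroup G, H.Normal) (a b : G) :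
    ⁅a, b⁆ ∈ zpowers b :=
  mul_mem ((hded _).conj_mem _ (mem_zpowers b) a) (inv_mem (mem_zpowers b))

lemma commutatorElement_mem_zpowers_of_mem_sup (hded : ∀ H : Subgroup G, H.Normal) {a b : G}
    (ha : a ^ 2 = ⁅a, b⁆) (hb : b ^ 2 = ⁅a, b⁆) (hc : ⁅a, b⁆ ^ 2 = 1) {w : G}
    (hw : w ∈ zpowers a ⊔ zpowers b) (hw1 : w ≠ 1) : ⁅a, b⁆ ∈ zpowers w := by
  -- Write `w = a ^ i * b ^ j`. As `⟨w⟩` is normal it contains `⁅w, b⁆ = ⁅a, b⁆ ^ i` and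
  -- `⁅a, w⁆ = ⁅a, b⁆ ^ j`; if `i` and `j` are both even, `w` is itself a power of `⁅a, b⁆`.
  have hac : Commute a ⁅a, b⁆ := ha ▸ Commute.self_pow a 2
  have hbc : Commute b ⁅a, b⁆ := hb ▸ Commute.self_pow b 2
  have hodd : ∀ k : ℤ, Odd k → ⁅a, b⁆ ^ k = ⁅a, b⁆ := by
    rintro k ⟨m, rfl⟩
    rw [zpow_add_one, zpow_mul, zpow_ofNat, hc, one_zpow, one_mul]
  have := hded (zpowers a)
  obtain ⟨x, hx, y, hy, rfl⟩ := mem_sup_of_normal_left.mp hw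
  obtain ⟨i, rfl⟩ := mem_zpowers_iff.mp hx
  obtain ⟨j, rfl⟩ := mem_zpowers_iff.mp hy
  have hci : ⁅a, b⁆ ^ i ∈ zpowers (a ^ i * b ^ j) := by
    have : ⁅a ^ i * b ^ j, b⁆ = ⁅a, b⁆ ^ i := by
      rw [← commutatorElement_zpow_left hac]; simp only [commutatorElement_def]; group
    exact this ▸ commutatorElement_mem_zpowers_left hded _ _
  have hcj : ⁅a, b⁆ ^ j ∈ zpowers (a ^ i * b ^ j) := by
    have : ⁅a, a ^ i * b ^ j⁆ = ⁅a, b⁆ ^ j := by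
      calc ⁅a, a ^ i * b ^ j⁆ = a ^ i * ⁅a, b ^ j⁆ * a ^ (-i) := by
            simp only [commutatorElement_def]; group
        _ = ⁅a, b⁆ ^ j := by
            rw [commutatorElement_zpow_right hbc, ((hac.zpow_right j).zpow_left i).eq]; group
    exact this ▸ commutatorElement_mem_zpowers_right hded _ _
  rcases Int.even_or_odd i with ⟨i', rfl⟩ | hi
  · rcases Int.even_or_odd j with ⟨j', rfl⟩ | hj
    · have hw' : a ^ (i' + i') * b ^ (j' + j') = ⁅a, b⁆ ^ (i' + j') := by
        rw [← two_mul, ← two_mul, zpow_mul, zpow_mul, zpow_ofNat, zpow_ofNat, ha, hb, ← zpow_add]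
      rw [hw'] at hw1 ⊢
      rcases Int.even_or_odd (i' + j') with ⟨k, hk⟩ | hk
      · exact absurd (by rw [hk, ← two_mul, zpow_mul, zpow_ofNat, hc, one_zpow]) hw1
      · rw [hodd _ hk]; exact mem_zpowers _
    · rwa [hodd j hj] at hcj
  · rwa [hodd i hi] at hci

def IsMinimalNoncommutingPair (a b : G) : Prop :=
  ¬Commute a b ∧ ∀ x y : G, ¬Commute x y → orderOf a + orderOf b ≤ orderOf x + orderOf y

lemma exists_isMinimalNoncommutingPair (h : ¬IsMulCommutative G) :
    ∃ a b : G, IsMinimalNoncommutingPair a b := by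
  classical
  have hex : ∃ n, ∃ a b : G, ¬Commute a b ∧ orderOf a + orderOf b = n := by
    by_contra! hc
    exact h ⟨⟨fun a b => not_not.mp fun hab => hc _ a b hab rfl⟩⟩
  obtain ⟨a, b, hab, hn⟩ := Nat.find_spec hex
  exact ⟨a, b, hab, fun x y hxy => hn ▸ Nat.find_min' hex ⟨x, y, hxy, rfl⟩⟩

namespace IsMinimalNoncommutingPair

variable {a b : G} {p : ℕ} [hp : Fact p.Prime]

lemma symm (h : IsMinimalNoncommutingPair a b) : IsMinimalNoncommutingPair b a :=
  ⟨fun hc => h.1 hc.symm, fun x y hxy => by rw [add_comm]; exact h.2 x y hxy⟩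

lemma ne_one (h : IsMinimalNoncommutingPair a b) : a ≠ 1 := by
  rintro rfl
  exact h.1 (Commute.one_left b)

lemma commute_pow (hG : IsPGroup p G) (h : IsMinimalNoncommutingPair a b) :
    Commute (a ^ p) b := by
  by_contra hc
  have hmin := h.2 _ _ hc
  have hlt : orderOf (a ^ p) < orderOf a := by
    rw [orderOf_pow_of_dvd hp.out.ne_zero (hG.dvd_orderOf h.ne_one)]
    exact Nat.div_lt_self (hG.isOfFinOrder hp.out.ne_zero a).orderOf_pos hp.out.one_lt
  omega

lemma orderOf_commutatorElement (hded : ∀ H : Subgroup G, H.Normal) (hG : IsPGroup p G)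
    (h : IsMinimalNoncommutingPair a b) : orderOf ⁅a, b⁆ = p := by
  refine orderOf_eq_prime ?_ (mt commutatorElement_eq_one_iff_commute.mp h.1)
  rw [← commutatorElement_pow_left (commute_of_mem_zpowers
    (commutatorElement_mem_zpowers_left hded a b))]
  exact commutatorElement_eq_one_iff_commute.mpr (h.commute_pow hG)

lemma zpowers_commutatorElement (hded : ∀ H : Subgroup G, H.Normal) (hG : IsPGroup p G)
    (h : IsMinimalNoncommutingPair a b) :
    zpowers ⁅a, b⁆ = zpowers (a ^ (orderOf a / p)) := by
  have hpa := hG.dvd_orderOf h.ne_one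
  have hord : orderOf (a ^ (orderOf a / p)) = p :=
    orderOf_pow_orderOf_div (hG.isOfFinOrder hp.out.ne_zero a).orderOf_pos.ne' hpa
  refine zpowers_eq_zpowers_of_prime_orderOf (by rw [hord]; exact hp.out) ?_
    (mt commutatorElement_eq_one_iff_commute.mp h.1)
  refine mem_zpowers_pow_orderOf_div hp.out.ne_zero hpa
    (commutatorElement_mem_zpowers_left hded a b) ?_
  rw [← h.orderOf_commutatorElement hded hG]
  exact pow_orderOf_eq_one _

lemma mul_pow_pow_ne_one (hG : IsPGroup p G) (h : IsMinimalNoncommutingPair a b) (r : ℕ) :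
    (a * b ^ r) ^ (orderOf a / p) ≠ 1 := by
  intro h1
  have hnc : ¬Commute (a * b ^ r) b := fun hc =>
    h.1 (by simpa using hc.mul_left (Commute.self_pow b r).symm.inv_left)
  have hpos := (hG.isOfFinOrder hp.out.ne_zero a).orderOf_pos
  have hmin := h.2 _ _ hnc
  have hle := orderOf_le_of_pow_eq_one
    (Nat.div_pos (Nat.le_of_dvd hpos (hG.dvd_orderOf h.ne_one)) hp.out.pos) h1
  have hlt := Nat.div_lt_self hpos hp.out.one_lt
  omega

lemma commutatorElement_pow_mul_pow_eq_one (hded : ∀ H : Subgroup G, H.Normal)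
    (hG : IsPGroup p G) (h : IsMinimalNoncommutingPair a b) {α β : ℕ}
    (hα : orderOf a = p ^ (α + 1)) (hβ : orderOf b = p ^ (β + 1)) (hαβ : α ≤ β) :
    ⁅b, a⁆ ^ (p ^ (β - α) * (p ^ α).choose 2) * b ^ p ^ β = 1 := by
  have hdiv : ∀ k, p ^ (k + 1) / p = p ^ k := fun k => by
    rw [pow_succ, Nat.mul_div_cancel _ hp.out.pos]
  set e := ⁅b, a⁆
  have hea : zpowers e = zpowers (a ^ p ^ α) := by
    rw [← zpowers_inv, commutatorElement_inv, h.zpowers_commutatorElement hded hG, hα, hdiv]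
  have heb : zpowers e = zpowers (b ^ p ^ β) := by
    rw [h.symm.zpowers_commutatorElement hded hG, hβ, hdiv]
  have hae : Commute a e := commute_of_mem_zpowers (commutatorElement_mem_zpowers_right hded b a)
  have hbe : Commute b e := commute_of_mem_zpowers (commutatorElement_mem_zpowers_left hded b a)
  set d := e ^ (p ^ (β - α) * (p ^ α).choose 2) * b ^ p ^ β
  have hpow : ∀ r : ℕ, (a * b ^ (p ^ (β - α) * r)) ^ p ^ α = a ^ p ^ α * d ^ r := by
    intro r
    have hcomm := commutatorElement_pow_left hbe (p ^ (β - α) * r)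
    rw [mul_pow_eq_commutatorElement_pow_mul (hcomm ▸ hae.pow_right _)
      (hcomm ▸ hbe.pow_pow _ _), hcomm, (hbe.symm.pow_pow _ _).mul_pow, ← pow_mul, ← pow_mul,
      ← pow_mul, ← pow_mul, (hae.pow_pow _ _).symm.eq, mul_assoc,
      mul_right_comm _ r, mul_right_comm _ r, ← pow_add, Nat.sub_add_cancel hαβ]
  -- A nontrivial `d` would generate `⟨e⟩ ∋ (a ^ p ^ α)⁻¹`, and `hpow` would then give an
  -- element `a * b ^ _` not commuting with `b` whose order is smaller than that of `a`.
  by_contra hd1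
  have hdmem : d ∈ zpowers e := mul_mem (pow_mem (mem_zpowers e) _) (heb ▸ mem_zpowers _)
  have hprime : (orderOf e).Prime := by
    rw [h.symm.orderOf_commutatorElement hded hG]; exact hp.out
  have hinv : (a ^ p ^ α)⁻¹ ∈ Submonoid.powers d := by
    rw [(hG.isOfFinOrder hp.out.ne_zero d).mem_powers_iff_mem_zpowers,
      zpowers_eq_zpowers_of_prime_orderOf hprime hdmem hd1, hea]
    exact inv_mem (mem_zpowers _)
  obtain ⟨r, hr : d ^ r = _⟩ := hinv
  apply h.mul_pow_pow_ne_one hG (p ^ (β - α) * r)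
  rw [hα, hdiv, hpow, hr, mul_inv_cancel]

lemma orderOf_eq_four (hded : ∀ H : Subgroup G, H.Normal) (hG : IsPGroup p G)
    (h : IsMinimalNoncommutingPair a b) (hle : orderOf a ≤ orderOf b) :
    p = 2 ∧ orderOf a = 4 ∧ orderOf b = 4 := by
  obtain ⟨α, hα⟩ := hG.exists_orderOf_eq_pow_succ h.ne_one
  obtain ⟨β, hβ⟩ := hG.exists_orderOf_eq_pow_succ h.symm.ne_one
  have hαβ : α ≤ β := by
    rw [hα, hβ] at hle
    have := (Nat.pow_le_pow_iff_right hp.out.one_lt).mp hle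
    omega
  have hd := h.commutatorElement_pow_mul_pow_eq_one hded hG hα hβ hαβ
  have hndvd : ¬p ∣ p ^ (β - α) * (p ^ α).choose 2 := by
    intro hdvd
    rw [orderOf_dvd_iff_pow_eq_one.mp (h.symm.orderOf_commutatorElement hded hG ▸ hdvd),
      one_mul] at hd
    have := Nat.le_of_dvd (pow_pos hp.out.pos _) (hβ ▸ orderOf_dvd_of_pow_eq_one hd)
    exact absurd this (not_le.mpr (Nat.pow_lt_pow_right hp.out.one_lt (Nat.lt_succ_self β)))
  have hβα : β - α = 0 := by
    by_contra hne
    exact hndvd (dvd_mul_of_dvd_left (dvd_pow_self p hne) _)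
  rw [hβα, pow_zero, one_mul] at hndvd
  have h2 : p ^ α = 2 := by
    by_contra hne
    exact hndvd (hp.out.dvd_choose_pow two_ne_zero (Ne.symm hne))
  obtain ⟨rfl, rfl⟩ := Nat.prime_two.pow_eq_iff.mp h2
  obtain rfl : β = 1 := by omega
  exact ⟨rfl, hα, hβ⟩

lemma sq_eq_commutatorElement (hded : ∀ H : Subgroup G, H.Normal) (hG : IsPGroup 2 G)
    (h : IsMinimalNoncommutingPair a b) (ha : orderOf a = 4) : a ^ 2 = ⁅a, b⁆ := by
  have hab := h.zpowers_commutatorElement hded hG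
  simp only [ha, Nat.reduceDiv] at hab
  refine (eq_of_mem_zpowers_of_orderOf_eq_two ?_ (hab ▸ mem_zpowers _)
    (mt commutatorElement_eq_one_iff_commute.mp h.1)).symm
  rw [orderOf_pow_of_dvd two_ne_zero (by rw [ha]; norm_num), ha]

end IsMinimalNoncommutingPair

theorem exists_isLeast_not_isChain (hded : ∀ H : Subgroup G, H.Normal) {p : ℕ} [Fact p.Prime]
    (hG : IsPGroup p G) (hG' : ¬IsMulCommutative G) :
    ∃ T Z : Subgroup G, IsLeast {W | W ≤ T ∧ W ≠ ⊥} Z ∧ ¬IsChain (· ≤ ·) (Set.Iic T) := by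
  obtain ⟨a, b, h⟩ := exists_isMinimalNoncommutingPair hG'
  wlog hle : orderOf a ≤ orderOf b generalizing a b
  · exact this b a h.symm (le_of_not_ge hle)
  obtain ⟨rfl, ha, hb⟩ := h.orderOf_eq_four hded hG hle
  have hc1 : ⁅a, b⁆ ≠ 1 := mt commutatorElement_eq_one_iff_commute.mp h.1
  have hc2 : ⁅a, b⁆ ^ 2 = 1 := h.orderOf_commutatorElement hded hG ▸ pow_orderOf_eq_one _
  have hac : a ^ 2 = ⁅a, b⁆ := h.sq_eq_commutatorElement hded hG ha
  have hbc : b ^ 2 = ⁅a, b⁆ := by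
    rw [h.symm.sq_eq_commutatorElement hded hG hb, ← commutatorElement_inv,
      inv_eq_of_mul_eq_one_right (by rw [← pow_two, hc2])]
  refine ⟨zpowers a ⊔ zpowers b, zpowers ⁅a, b⁆, ⟨⟨?_, zpowers_ne_bot.mpr hc1⟩, ?_⟩, ?_⟩
  · exact zpowers_le.mpr (mem_sup_left (commutatorElement_mem_zpowers_left hded a b))
  · rintro W ⟨hWT, hW⟩
    obtain ⟨w, hwW, hw1⟩ := W.bot_or_exists_ne_one.resolve_left hW
    exact zpowers_le.mpr (zpowers_le.mpr hwW
      (commutatorElement_mem_zpowers_of_mem_sup hded hac hbc hc2 (hWT hwW) hw1))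
  · intro hchain
    have hne : zpowers a ≠ zpowers b := fun heq =>
      h.1 (commute_of_mem_zpowers (heq ▸ mem_zpowers a)).symm
    rcases hchain (Set.mem_Iic.mpr le_sup_left) (Set.mem_Iic.mpr le_sup_right) hne with hab | hba
    · exact h.1 (commute_of_mem_zpowers (zpowers_le.mp hab)).symm
    · exact h.1 (commute_of_mem_zpowers (zpowers_le.mp hba))

end Dedekind

namespace IsELIso

variable {G₁ G₂ : Type*} [Group G₁] [Group G₂] {f : Subgroup G₁ → Subgroup G₂}

lemma normal_map (hf : IsELIso f) {N : Subgroup G₁} [N.Normal] : (f N).Normal := by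
  rw [← N.normalCore_eq_self, hf.2.1]
  exact normalCore_normal _

lemma le_iff (hf : IsELIso f) {N H : Subgroup G₁} [N.Normal] : f N ≤ f H ↔ N ≤ H := by
  have := hf.normal_map (N := N)
  have hjoin := hf.2.2.2 N H
  rw [N.normalCore_eq_self, (f N).normalCore_eq_self] at hjoin
  calc f N ≤ f H ↔ f N ⊔ (f H).normalCore = (f H).normalCore := by
        rw [sup_eq_right, normal_le_normalCore]
    _ ↔ f (N ⊔ H.normalCore) = f H.normalCore := by rw [hjoin, hf.2.1 H]
    _ ↔ N ≤ H := by rw [hf.1.1.eq_iff, sup_eq_right, normal_le_normalCore]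

lemma normal_of_le (hf : IsELIso f) {K : Subgroup G₂} (hK : f (commutator G₁) ≤ K) :
    K.Normal := by
  obtain ⟨H, rfl⟩ := hf.1.2 K
  have := Normal.of_commutator_le G₁ (hf.le_iff.mp hK)
  exact hf.normal_map

lemma quotient_normal (hf : IsELIso f) [(f (commutator G₁)).Normal]
    (S : Subgroup (G₂ ⧸ f (commutator G₁))) : S.Normal := by
  rw [← map_comap_eq_self_of_surjective (QuotientGroup.mk'_surjective _) S]
  exact (hf.normal_of_le (QuotientGroup.le_comap_mk' _ _)).map _ (QuotientGroup.mk'_surjective _)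

noncomputable def orderIsoAboveCommutator (hf : IsELIso f) :
    {H : Subgroup G₁ // commutator G₁ ≤ H} ≃o {K : Subgroup G₂ // f (commutator G₁) ≤ K} where
  toEquiv := (Equiv.ofBijective f hf.1).subtypeEquiv fun _ => hf.le_iff.symm
  map_rel_iff' {H _} := by
    have := Normal.of_commutator_le G₁ H.2
    exact hf.le_iff

noncomputable def quotientOrderIso (hf : IsELIso f) [(f (commutator G₁)).Normal] :
    Subgroup (G₁ ⧸ commutator G₁) ≃o Subgroup (G₂ ⧸ f (commutator G₁)) :=
  (QuotientGroup.comapMk'OrderIso _).trans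
    (hf.orderIsoAboveCommutator.trans (QuotientGroup.comapMk'OrderIso _).symm)

end IsELIso

end

/-- Proposition 3 (2.2): if `f : L(G₁) → L(G₂)` is an ℰL-isomorphism and `G₂` satisfies
the condition (*), then `f(D(G₁)) ⊇ D(G₂)`, where `D` denotes the derived subgroup. -/
theorem commutator_le_eliso_commutator {G₁ G₂ : Type*} [Group G₁] [Group G₂]
    (f : Subgroup G₁ → Subgroup G₂) (hf : IsELIso f) (hstar : CondStar G₂) :
    commutator G₂ ≤ f (commutator G₁) := by
  have := hf.normal_map (N := commutator G₁)
  by_contra hD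
  have hnc : ¬IsMulCommutative (G₂ ⧸ f (commutator G₁)) :=
    mt Subgroup.Normal.quotient_commutative_iff_commutator_le.mp hD
  obtain ⟨p, hp, hpG⟩ := hstar (f (commutator G₁)) ⟨hf.quotient_normal, fun h => hnc ⟨⟨h⟩⟩⟩
  have := Fact.mk hp
  obtain ⟨T, Z, hZ, hT⟩ := exists_isLeast_not_isChain hf.quotient_normal hpG hnc
  have := (Subgroup.Normal.quotient_commutative_iff_commutator_le (N := commutator G₁)).mpr le_rfl
  let e := hf.quotientOrderIso
  have hchain := (isChain_Iic_of_isLeast (e.symm.isLeast_map hZ)).image e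
  rw [e.image_Iic, e.apply_symm_apply] at hchain
  exact hT hchain
end

section
/- Let G be a group satisfying the condition (*): for every normal subgroup N of G, if the quotient G/N is hamiltonian, then G/N is a p-group for some prime p. Let D(G) be the derived subgroup of G and f : L(G) → L(G) an ℰL-automorphism of G. Then f(D(G)) = D(G). -/
/-!
Above `D(G)` every subgroup is normal, and on normal subgroups an ℰL-automorphism `f` preserves
and reflects inclusion. Hence `f` induces a lattice isomorphism between the subgroup lattices of
the abelian group `G ⧸ D(G)` and of `G ⧸ f(D(G))`, all of whose subgroups are normal. If the latter
were nonabelian, it would be a hamiltonian `p`-group by (*). There, a noncommuting pair `x, y`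
with `orderOf x + orderOf y` minimal generates a cocyclic subgroup (one whose nontrivial subgroups
all contain `⟨⁅x, y⁆⟩`, as in `Q₈`) in which `⟨x⟩` and `⟨y⟩` are incomparable. But in an abelian
group the subgroups of a cocyclic subgroup form a chain. So `D(G) ≤ f(D(G))`, and applying this to
`f⁻¹` gives equality.
-/

open Subgroup
open scoped commutatorElement

section Cyclic

variable {G : Type*} [Group G]

theorem pow_zpow_comm (x : G) (n : ℕ) (e : ℤ) : (x ^ n) ^ e = (x ^ e) ^ n := by
  rw [← zpow_natCast, ← zpow_natCast (x ^ e), ← zpow_mul, ← zpow_mul, mul_comm]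

theorem Commute.of_mem_zpowers {a b : G} (h : a ∈ zpowers b) : Commute a b := by
  obtain ⟨k, rfl⟩ := h
  exact (Commute.refl b).zpow_left k

theorem mem_zpowers_pow_orderOf_div_s16 {x z : G} {d : ℕ} (hd0 : d ≠ 0) (hd : d ∣ orderOf x)
    (hz : z ∈ zpowers x) (hzd : z ^ d = 1) : z ∈ zpowers (x ^ (orderOf x / d)) := by
  obtain ⟨j, rfl⟩ := hz
  have h : ((orderOf x / d : ℕ) : ℤ) * d ∣ j * d := by
    rw [← Nat.cast_mul, Nat.div_mul_cancel hd, orderOf_dvd_iff_zpow_eq_one, zpow_mul,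
      zpow_natCast, hzd]
  obtain ⟨m, hm⟩ := Int.dvd_of_mul_dvd_mul_right (by exact_mod_cast hd0) h
  exact ⟨m, by simp only [hm, zpow_mul, zpow_natCast]⟩

theorem zpowers_eq_of_mem_of_orderOf_eq {a b : G} (h : a ∈ zpowers b)
    (hab : orderOf a = orderOf b) (hb : orderOf b ≠ 0) : zpowers a = zpowers b := by
  have : Finite (zpowers b) := Nat.finite_of_card_ne_zero (by rwa [Nat.card_zpowers])
  exact eq_of_le_of_card_ge (zpowers_le.mpr h) (by rw [Nat.card_zpowers, Nat.card_zpowers, hab])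

theorem mem_zpowers_of_pow_prime_eq_one {p k : ℕ} (hp : p.Prime) {x t z : G}
    (hx : x ^ p ^ k = 1) (ht : t ∈ zpowers x) (ht1 : t ≠ 1) (hz : z ∈ zpowers x)
    (hzp : z ^ p = 1) : z ∈ zpowers t := by
  have hprime_dvd : ∀ {u : G}, u ∈ zpowers x → u ≠ 1 → orderOf u ≠ 0 ∧ p ∣ orderOf u := by
    intro u hu hu1
    obtain ⟨m, -, hm⟩ := (Nat.dvd_prime_pow hp).mp
      ((orderOf_dvd_of_mem_zpowers hu).trans (orderOf_dvd_of_pow_eq_one hx))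
    refine ⟨by simp [hm, hp.ne_zero], hm ▸ dvd_pow_self p fun h => hu1 ?_⟩
    rwa [h, pow_zero, orderOf_eq_one_iff] at hm
  obtain ⟨hx0, hpx⟩ := hprime_dvd (mem_zpowers x) (by rintro rfl; exact ht1 (by simpa using ht))
  obtain ⟨ht0, hpt⟩ := hprime_dvd ht ht1
  set t' := t ^ (orderOf t / p)
  have ht' : orderOf t' = p := orderOf_pow_orderOf_div ht0 hpt
  have ht'x : t' ∈ zpowers (x ^ (orderOf x / p)) :=
    mem_zpowers_pow_orderOf_div_s16 hp.ne_zero hpx (pow_mem ht _) (ht' ▸ pow_orderOf_eq_one t')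
  have hgen : zpowers t' = zpowers (x ^ (orderOf x / p)) :=
    zpowers_eq_of_mem_of_orderOf_eq ht'x (by rw [ht', orderOf_pow_orderOf_div hx0 hpx])
      (by rw [orderOf_pow_orderOf_div hx0 hpx]; exact hp.ne_zero)
  have hz' := mem_zpowers_pow_orderOf_div_s16 hp.ne_zero hpx hz hzp
  rw [← hgen] at hz'
  exact zpowers_le.mpr (pow_mem (mem_zpowers t) _) hz'

theorem exists_pow_eq_of_pow_prime_eq_one {p k n : ℕ} (hp : p.Prime) {x w : G}
    (hx : x ^ p ^ k = 1) (hn0 : n ≠ 0) (hn : n < orderOf x) (hw : w ∈ zpowers x)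
    (hwp : w ^ p = 1) : ∃ v ∈ zpowers x, v ^ n = w := by
  obtain ⟨e, rfl⟩ := mem_zpowers_iff.mp <| mem_zpowers_of_pow_prime_eq_one hp hx
    (pow_mem (mem_zpowers x) n) (pow_ne_one_of_lt_orderOf hn0 hn) hw hwp
  exact ⟨x ^ e, zpow_mem (mem_zpowers x) e, (pow_zpow_comm x n e).symm⟩

end Cyclic

section Commutator

variable {G : Type*} [Group G]

theorem commutatorElement_zpow_left_s16 {x y : G} (h : Commute x ⁅x, y⁆) (n : ℤ) :
    ⁅x ^ n, y⁆ = ⁅x, y⁆ ^ n := by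
  have hconj : y * x⁻¹ * y⁻¹ = x⁻¹ * ⁅x, y⁆ := by rw [commutatorElement_def]; group
  calc ⁅x ^ n, y⁆ = x ^ n * (y * x⁻¹ * y⁻¹) ^ n := by
        rw [conj_zpow, commutatorElement_def, inv_zpow]; group
    _ = ⁅x, y⁆ ^ n := by rw [hconj, h.inv_left.mul_zpow, inv_zpow, mul_inv_cancel_left]

theorem mul_pow_of_commute_commutatorElement {u v : G} (hu : Commute u ⁅v, u⁆)
    (hv : Commute v ⁅v, u⁆) (n : ℕ) : (u * v) ^ n = ⁅v, u⁆ ^ n.choose 2 * u ^ n * v ^ n := by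
  have hswap : v * u = ⁅v, u⁆ * u * v := by rw [commutatorElement_def]; group
  have hpow : ∀ m : ℕ, v ^ m * u = ⁅v, u⁆ ^ m * u * v ^ m := by
    intro m
    induction m with
    | zero => simp
    | succ m ih =>
      calc v ^ (m + 1) * u = v ^ m * (v * u) := by rw [pow_succ, mul_assoc]
        _ = v ^ m * ⁅v, u⁆ * u * v := by rw [hswap]; group
        _ = ⁅v, u⁆ * (v ^ m * u) * v := by rw [(hv.pow_left m).eq]; group
        _ = ⁅v, u⁆ ^ (m + 1) * u * v ^ (m + 1) := by rw [ih]; group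
  induction n with
  | zero => simp
  | succ n ih =>
    calc (u * v) ^ (n + 1) = ⁅v, u⁆ ^ n.choose 2 * u ^ n * (v ^ n * u) * v := by
          rw [pow_succ, ih]; group
      _ = ⁅v, u⁆ ^ n.choose 2 * (u ^ n * ⁅v, u⁆ ^ n) * u * v ^ n * v := by rw [hpow]; group
      _ = ⁅v, u⁆ ^ (n + 1).choose 2 * u ^ (n + 1) * v ^ (n + 1) := by
          rw [(hu.pow_pow n n).eq, Nat.choose_succ_succ, Nat.choose_one_right]; group

theorem commutatorElement_mem_zpowers_left_s16 {a b : G} (h : (zpowers a).Normal) :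
    ⁅a, b⁆ ∈ zpowers a := by
  rw [commutatorElement_def, show a * b * a⁻¹ * b⁻¹ = a * (b * a⁻¹ * b⁻¹) by group]
  exact mul_mem (mem_zpowers a) (h.conj_mem _ (inv_mem (mem_zpowers a)) b)

theorem commutatorElement_mem_zpowers_right_s16 {a b : G} (h : (zpowers b).Normal) :
    ⁅a, b⁆ ∈ zpowers b := by
  rw [commutatorElement_def]
  exact mul_mem (h.conj_mem _ (mem_zpowers b) a) (inv_mem (mem_zpowers b))

end Commutator

/-- Stated in any lattice; for a subgroup `W` it is the usual notion of a cocyclic group. -/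
def IsCocyclic {α : Type*} [PartialOrder α] [OrderBot α] (w : α) : Prop :=
  ∃ z ≠ ⊥, ∀ s ≤ w, s ≠ ⊥ → z ≤ s

theorem IsCocyclic.map_orderIso {α β : Type*} [PartialOrder α] [OrderBot α] [PartialOrder β]
    [OrderBot β] {w : α} (h : IsCocyclic w) (e : α ≃o β) : IsCocyclic (e w) := by
  obtain ⟨z, hz, hzw⟩ := h
  refine ⟨e z, by simpa using hz, fun s hs hs0 => ?_⟩
  rw [← e.apply_symm_apply s, e.le_iff_le]
  exact hzw _ (e.symm_apply_le.mpr hs) (by simpa using hs0)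

section Cocyclic

variable {A : Type*} [Group A] {W : Subgroup A}

theorem IsCocyclic.exists_prime_orderOf (hW : IsCocyclic W) (hW0 : W ≠ ⊥) :
    ∃ p z, p.Prime ∧ orderOf z = p ∧ ∀ w ∈ W, w ≠ 1 → z ∈ zpowers w := by
  obtain ⟨Z, hZ, hZW⟩ := hW
  have hle : ∀ w ∈ W, w ≠ 1 → Z ≤ zpowers w := fun w hw hw1 =>
    hZW _ (zpowers_le.mpr hw) (zpowers_eq_bot.not.mpr hw1)
  obtain ⟨⟨z₀, hz₀⟩, hz₀1⟩ := ne_bot_iff_exists_ne_one.mp hZ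
  replace hz₀1 : z₀ ≠ 1 := by simpa using hz₀1
  have hz₀W : z₀ ∈ W := hZW W le_rfl hW0 hz₀
  -- `z₀` is a power of its square, so it has finite order
  have hfin : orderOf z₀ ≠ 0 := by
    by_cases hsq : z₀ ^ 2 = 1
    · exact (orderOf_pos_iff.mpr (isOfFinOrder_iff_pow_eq_one.mpr ⟨2, two_pos, hsq⟩)).ne'
    · intro h0
      have := mem_zpowers_pow_iff.mp (hle _ (pow_mem hz₀W 2) hsq hz₀)
      rw [h0, Nat.gcd_zero_right] at this
      exact absurd this (by norm_num)
  set p := (orderOf z₀).minFac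
  have hp : p.Prime := Nat.minFac_prime (by rwa [Ne, orderOf_eq_one_iff])
  exact ⟨p, z₀ ^ (orderOf z₀ / p), hp, orderOf_pow_orderOf_div hfin (Nat.minFac_dvd _),
    fun w hw hw1 => hle w hw hw1 (pow_mem hz₀ _)⟩

variable {p : ℕ} {z : A}

theorem exists_orderOf_eq_prime_pow (hp : p.Prime) (hz : orderOf z = p)
    (hW : ∀ w ∈ W, w ≠ 1 → z ∈ zpowers w) {w : A} (hw : w ∈ W) : ∃ k, orderOf w = p ^ k := by
  by_cases hw1 : w = 1
  · exact ⟨0, by simp [hw1]⟩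
  have hfin : orderOf w ≠ 0 := by
    obtain ⟨m, hm⟩ := mem_zpowers_iff.mp (hW w hw hw1)
    have hm0 : m ≠ 0 := by rintro rfl; exact (hz ▸ hp.ne_one) (by simp [← hm])
    refine (orderOf_pos_iff.mpr (isOfFinOrder_iff_zpow_eq_one.mpr ⟨m * p, ?_, ?_⟩)).ne'
    · exact mul_ne_zero hm0 (by exact_mod_cast hp.ne_zero)
    · rw [zpow_mul, hm, zpow_natCast, ← hz, pow_orderOf_eq_one]
  refine ⟨_, Nat.eq_prime_pow_of_unique_prime_dvd hfin fun {r} hr hrw => ?_⟩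
  have hwr := orderOf_pow_orderOf_div hfin hrw
  have hzw := hW _ (pow_mem hw _) (fun h => hr.ne_one (by rw [← hwr, h, orderOf_one]))
  exact ((Nat.prime_dvd_prime_iff_eq hp hr).mp (hz ▸ hwr ▸ orderOf_dvd_of_mem_zpowers hzw)).symm

end Cocyclic

section CommGroup

variable {A : Type*} [CommGroup A] {W : Subgroup A} {p : ℕ} {z : A}

theorem mem_zpowers_of_pow_orderOf_eq_one_s16 (hp : p.Prime) (hz : orderOf z = p)
    (hW : ∀ w ∈ W, w ≠ 1 → z ∈ zpowers w) :
    ∀ β : ℕ, ∀ {a b : A}, a ∈ W → b ∈ W → orderOf b = p ^ β → a ^ p ^ β = 1 → a ∈ zpowers b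
  | 0, a, b, _, _, _, ha => by simp_all
  | β + 1, a, b, haW, hbW, hb, ha => by
    have hbp : orderOf (b ^ p) = p ^ β := by
      rw [orderOf_pow_of_dvd hp.ne_zero (hb ▸ dvd_pow_self p β.succ_ne_zero), hb, pow_succ,
        Nat.mul_div_cancel _ hp.pos]
    obtain ⟨k, hk⟩ := mem_zpowers_iff.mp <| mem_zpowers_of_pow_orderOf_eq_one_s16 hp hz hW β
      (pow_mem haW p) (pow_mem hbW p) hbp (by rw [← pow_mul, ← pow_succ', ha])
    -- `a / b ^ k` has order dividing `p`, so it lies in `⟨z⟩ ≤ ⟨b⟩`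
    have hquot : (a / b ^ k) ^ p = 1 := by
      rw [div_pow, ← pow_zpow_comm, hk, div_self']
    have hmem : a / b ^ k ∈ zpowers b := by
      by_cases h1 : a / b ^ k = 1
      · rw [h1]; exact one_mem _
      have hb1 : b ≠ 1 := by
        rintro rfl
        rw [orderOf_one] at hb
        exact (Nat.one_lt_pow β.succ_ne_zero hp.one_lt).ne hb
      have hz1 : z ≠ 1 := by rintro rfl; exact hp.ne_one (by rw [← hz, orderOf_one])
      refine zpowers_le.mpr (hW b hbW hb1) ?_
      exact mem_zpowers_of_pow_prime_eq_one (k := 1) hp (by rwa [pow_one])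
        (hW _ (div_mem haW (zpow_mem hbW k)) h1) hz1 (mem_zpowers _) hquot
    simpa using mul_mem hmem (zpow_mem (mem_zpowers b) k)

theorem IsCocyclic.le_or_le (hW : IsCocyclic W) {X Y : Subgroup A} (hX : X ≤ W) (hY : Y ≤ W) :
    X ≤ Y ∨ Y ≤ X := by
  by_contra! h
  obtain ⟨a, haX, haY⟩ := SetLike.not_le_iff_exists.mp h.1
  obtain ⟨b, hbY, hbX⟩ := SetLike.not_le_iff_exists.mp h.2
  have hW0 : W ≠ ⊥ := by
    rintro rfl
    exact haY ((mem_bot.mp (hX haX)).symm ▸ Y.one_mem)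
  obtain ⟨p, z, hp, hz, hzW⟩ := hW.exists_prime_orderOf hW0
  obtain ⟨α, hα⟩ := exists_orderOf_eq_prime_pow hp hz hzW (hX haX)
  obtain ⟨β, hβ⟩ := exists_orderOf_eq_prime_pow hp hz hzW (hY hbY)
  rcases le_total α β with hαβ | hβα
  · refine haY (zpowers_le.mpr hbY (mem_zpowers_of_pow_orderOf_eq_one_s16 hp hz hzW β (hX haX)
      (hY hbY) hβ ?_))
    exact orderOf_dvd_iff_pow_eq_one.mp (hα ▸ pow_dvd_pow p hαβ)
  · refine hbX (zpowers_le.mpr haX (mem_zpowers_of_pow_orderOf_eq_one_s16 hp hz hzW α (hY hbY)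
      (hX haX) hα ?_))
    exact orderOf_dvd_iff_pow_eq_one.mp (hβ ▸ pow_dvd_pow p hβα)

end CommGroup

section Dedekind

variable {Q : Type*} [Group Q]

theorem exists_minimal_not_commute (h : ∃ x y : Q, ¬Commute x y) :
    ∃ x y : Q, ¬Commute x y ∧ orderOf y ≤ orderOf x ∧
      ∀ a b : Q, orderOf a + orderOf b < orderOf x + orderOf y → Commute a b := by
  classical
  have hex : ∃ n, ∃ x y : Q, ¬Commute x y ∧ orderOf x + orderOf y = n :=
    let ⟨x, y, hxy⟩ := h; ⟨_, x, y, hxy, rfl⟩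
  obtain ⟨x, y, hxy, hn⟩ := Nat.find_spec hex
  have hmin : ∀ a b : Q, orderOf a + orderOf b < Nat.find hex → Commute a b :=
    fun a b hab => by_contra fun h => Nat.find_min hex hab ⟨a, b, h, rfl⟩
  rcases le_total (orderOf y) (orderOf x) with hyx | hxy'
  · exact ⟨x, y, hxy, hyx, hn ▸ hmin⟩
  · exact ⟨y, x, fun h => hxy h.symm, hxy', by rw [add_comm, hn]; exact hmin⟩

variable {p : ℕ} [hp : Fact p.Prime] (hQ : ∀ H : Subgroup Q, H.Normal) (hQp : IsPGroup p Q)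
  {x y : Q} (hxy : ¬Commute x y)
  (hmin : ∀ a b : Q, orderOf a + orderOf b < orderOf x + orderOf y → Commute a b)
include hQ hQp hxy hmin

theorem commutatorElement_pow_prime_eq_one_of_minimal : ⁅x, y⁆ ^ p = 1 := by
  have hcx : Commute x ⁅x, y⁆ :=
    (Commute.of_mem_zpowers (commutatorElement_mem_zpowers_left_s16 (hQ _))).symm
  have hx1 : x ≠ 1 := by rintro rfl; exact hxy (Commute.one_left y)
  have hx0 := (hQp.isOfFinOrder hp.out.ne_zero x).orderOf_pos
  have hlt : orderOf (x ^ p) < orderOf x := by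
    rw [orderOf_pow_of_dvd hp.out.ne_zero (hQp.dvd_orderOf hx1)]
    exact Nat.div_lt_self hx0 hp.out.one_lt
  have hcomm := commutatorElement_eq_one_iff_commute.mpr (hmin (x ^ p) y (by omega))
  rwa [← zpow_natCast, commutatorElement_zpow_left_s16 hcx, zpow_natCast] at hcomm

theorem pow_ne_pow_of_minimal {n : ℕ} (hn0 : n ≠ 0) (hn : n < orderOf y)
    (hpn : p ∣ n.choose 2) {v : Q} (hv : v ∈ zpowers x) : v ^ n ≠ y ^ n := by
  intro hvn
  obtain ⟨e, rfl⟩ := mem_zpowers_iff.mp hv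
  have hcx : Commute x ⁅x, y⁆ :=
    (Commute.of_mem_zpowers (commutatorElement_mem_zpowers_left_s16 (hQ _))).symm
  have hcy : Commute y ⁅x, y⁆ :=
    (Commute.of_mem_zpowers (commutatorElement_mem_zpowers_right_s16 (hQ _))).symm
  have hd : ⁅(x ^ e)⁻¹, y⁆ = ⁅x, y⁆ ^ (-e) := by
    rw [← zpow_neg, commutatorElement_zpow_left_s16 hcx]
  -- by the class-two power formula, `y * (x ^ e)⁻¹` has order at most `n < orderOf y`
  have hu : (y * (x ^ e)⁻¹) ^ n = 1 := by
    have hdp : (⁅x, y⁆ ^ (-e)) ^ p = 1 := by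
      rw [← pow_zpow_comm, commutatorElement_pow_prime_eq_one_of_minimal hQ hQp hxy hmin, one_zpow]
    rw [mul_pow_of_commute_commutatorElement (hd ▸ hcy.zpow_right _)
      (hd ▸ (hcx.zpow_left e).zpow_right (-e) |>.inv_left), hd,
      orderOf_dvd_iff_pow_eq_one.mp ((orderOf_dvd_of_pow_eq_one hdp).trans hpn), one_mul,
      inv_pow, hvn, mul_inv_cancel]
  have hlt := (orderOf_le_of_pow_eq_one (Nat.pos_of_ne_zero hn0) hu).trans_lt hn
  have hxu := hmin x (y * (x ^ e)⁻¹) (by omega)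
  exact hxy (by simpa using hxu.mul_right ((Commute.refl x).zpow_right e))

theorem pow_prime_mem_zpowers_of_minimal (hyx : orderOf y ≤ orderOf x) : y ^ p ∈ zpowers x := by
  have hc1 : ⁅x, y⁆ ≠ 1 := commutatorElement_eq_one_iff_commute.not.mpr hxy
  have hy1 : y ≠ 1 := by rintro rfl; exact hxy (Commute.one_right x)
  obtain ⟨ky, hky⟩ := hQp y
  obtain ⟨kx, hkx⟩ := hQp x
  obtain ⟨b, hb⟩ := IsPGroup.iff_orderOf.mp hQp y
  have hb0 : b ≠ 0 := by rintro rfl; exact hy1 (orderOf_eq_one_iff.mp (by simpa using hb))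
  set n := p ^ (b - 1)
  have hnp : n * p = orderOf y := by rw [hb, ← pow_succ, Nat.sub_add_cancel (by omega)]
  have hn : n < orderOf y := by
    rw [← hnp]; exact lt_mul_right (pow_pos hp.out.pos _) hp.out.one_lt
  -- `y ^ n` lies in the subgroup of order `p` of `⟨y⟩`, which is `⟨⁅x, y⁆⟩ ≤ ⟨x⟩`
  have hynp : (y ^ n) ^ p = 1 := by rw [← pow_mul, hnp, pow_orderOf_eq_one]
  have hynx : y ^ n ∈ zpowers x :=
    zpowers_le.mpr (commutatorElement_mem_zpowers_left_s16 (hQ _)) <|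
      mem_zpowers_of_pow_prime_eq_one hp.out hky (commutatorElement_mem_zpowers_right_s16 (hQ _)) hc1
        (pow_mem (mem_zpowers y) n) hynp
  obtain ⟨v, hvx, hv⟩ := exists_pow_eq_of_pow_prime_eq_one hp.out hkx (pow_ne_zero _ hp.out.ne_zero)
    (hn.trans_le hyx) hynx hynp
  -- `p ∣ n.choose 2` unless `n = 2`, which is the case of `Q₈`
  by_cases hn2 : n = 2
  · have hb1 : b - 1 ≠ 0 := by rintro h; simp [n, h] at hn2
    have hp2 : p = 2 := (Nat.prime_dvd_prime_iff_eq hp.out Nat.prime_two).mp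
      (hn2 ▸ dvd_pow_self p hb1)
    rwa [hp2, ← hn2]
  · exact absurd hv (pow_ne_pow_of_minimal hQ hQp hxy hmin (pow_ne_zero _ hp.out.ne_zero) hn
      (hp.out.dvd_choose_pow two_ne_zero (Ne.symm hn2)) hvx)

theorem mem_zpowers_of_commute_of_minimal (hyx : orderOf y ≤ orderOf x) {s : Q}
    (hs : s ∈ zpowers x ⊔ zpowers y) (hsx : Commute s x) : s ∈ zpowers x := by
  have := hQ (zpowers x)
  obtain ⟨a, ha, b, hb, rfl⟩ := mem_sup_of_normal_left.mp hs
  obtain ⟨j, rfl⟩ := mem_zpowers_iff.mp hb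
  have hjx : Commute (y ^ j) x := by
    simpa using (Commute.of_mem_zpowers ha).inv_left.mul_left hsx
  have hcy : Commute y ⁅y, x⁆ := by
    rw [← commutatorElement_inv]
    exact (Commute.of_mem_zpowers (commutatorElement_mem_zpowers_right_s16 (hQ _))).symm.inv_right
  have hord : orderOf ⁅y, x⁆ = p := by
    refine orderOf_eq_prime ?_ (commutatorElement_eq_one_iff_commute.not.mpr fun h => hxy h.symm)
    rw [← commutatorElement_inv, inv_pow,
      commutatorElement_pow_prime_eq_one_of_minimal hQ hQp hxy hmin, inv_one]
  obtain ⟨m, rfl⟩ : (p : ℤ) ∣ j := hord ▸ orderOf_dvd_iff_zpow_eq_one.mpr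
    (by rw [← commutatorElement_zpow_left_s16 hcy, commutatorElement_eq_one_iff_commute]; exact hjx)
  rw [zpow_mul, zpow_natCast]
  exact mul_mem ha (zpow_mem (pow_prime_mem_zpowers_of_minimal hQ hQp hxy hmin hyx) m)

theorem isCocyclic_zpowers_sup_of_minimal (hyx : orderOf y ≤ orderOf x) :
    IsCocyclic (zpowers x ⊔ zpowers y) := by
  have hcx := commutatorElement_mem_zpowers_left_s16 (hQ (zpowers x)) (b := y)
  have hcp := commutatorElement_pow_prime_eq_one_of_minimal hQ hQp hxy hmin
  obtain ⟨kx, hkx⟩ := hQp x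
  refine ⟨zpowers ⁅x, y⁆, zpowers_eq_bot.not.mpr (commutatorElement_eq_one_iff_commute.not.mpr hxy),
    fun S hSW hS => ?_⟩
  obtain ⟨⟨s, hsS⟩, hs1⟩ := ne_bot_iff_exists_ne_one.mp hS
  replace hs1 : s ≠ 1 := by simpa using hs1
  refine zpowers_le.mpr (zpowers_le.mpr hsS ?_)
  -- either `s ∈ ⟨x⟩`, or `⁅s, x⁆` is a nontrivial element of `⟨s⟩ ∩ ⟨x⟩`
  by_cases hsx : Commute s x
  · exact mem_zpowers_of_pow_prime_eq_one hp.out hkx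
      (mem_zpowers_of_commute_of_minimal hQ hQp hxy hmin hyx (hSW hsS) hsx) hs1 hcx hcp
  · exact zpowers_le.mpr (commutatorElement_mem_zpowers_left_s16 (hQ _)) <|
      mem_zpowers_of_pow_prime_eq_one hp.out hkx (commutatorElement_mem_zpowers_right_s16 (hQ _))
        (commutatorElement_eq_one_iff_commute.not.mpr hsx) hcx hcp

end Dedekind

theorem exists_isCocyclic_not_le_of_isPGroup {Q : Type*} [Group Q] {p : ℕ} [Fact p.Prime]
    (hQ : ∀ H : Subgroup Q, H.Normal) (hQp : IsPGroup p Q) (h : ∃ x y : Q, ¬Commute x y) :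
    ∃ W X Y : Subgroup Q, IsCocyclic W ∧ X ≤ W ∧ Y ≤ W ∧ ¬X ≤ Y ∧ ¬Y ≤ X := by
  obtain ⟨x, y, hxy, hyx, hmin⟩ := exists_minimal_not_commute h
  refine ⟨_, _, _, isCocyclic_zpowers_sup_of_minimal hQ hQp hxy hmin hyx, le_sup_left,
    le_sup_right, fun h => hxy ?_, fun h => hxy ?_⟩
  · exact Commute.of_mem_zpowers (zpowers_le.mp h)
  · exact (Commute.of_mem_zpowers (zpowers_le.mp h)).symm

namespace IsELIso

variable {G₁ G₂ : Type*} [Group G₁] [Group G₂] {f : Subgroup G₁ → Subgroup G₂}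

theorem map_normal (hf : IsELIso f) {H : Subgroup G₁} (hH : H.Normal) : (f H).Normal := by
  rw [← H.normalCore_eq_self, hf.2.1]
  exact normalCore_normal _

theorem map_le_map_iff (hf : IsELIso f) {H K : Subgroup G₁} (hH : H.Normal) :
    f H ≤ f K ↔ H ≤ K := by
  have hfH := hf.map_normal hH
  have key : f (H ⊓ K.normalCore) = f H ⊓ (f K).normalCore := by
    simpa only [H.normalCore_eq_self, (f H).normalCore_eq_self] using hf.2.2.1 H K
  calc f H ≤ f K ↔ f H ≤ (f K).normalCore := normal_le_normalCore.symm
    _ ↔ f H ⊓ (f K).normalCore = f H := inf_eq_left.symm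
    _ ↔ H ⊓ K.normalCore = H := by rw [← key, hf.1.1.eq_iff]
    _ ↔ H ≤ K := inf_eq_left.trans normal_le_normalCore

theorem symm (hf : IsELIso f) : IsELIso (Equiv.ofBijective f hf.1).symm := by
  set e := Equiv.ofBijective f hf.1
  have he : ∀ H, f (e.symm H) = H := e.apply_symm_apply
  refine ⟨e.symm.bijective, fun H => hf.1.1 ?_, fun H K => hf.1.1 ?_, fun H K => hf.1.1 ?_⟩
  · rw [he, hf.2.1, he]
  · rw [he, hf.2.2.1, he, he]
  · rw [he, hf.2.2.2, he, he]

section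

variable {N : Subgroup G₁} (hN : ∀ H, N ≤ H → H.Normal)
include hN

theorem normal_of_map_le (hf : IsELIso f) {K : Subgroup G₂} (hK : f N ≤ K) : K.Normal := by
  obtain ⟨H, rfl⟩ := hf.1.2 K
  exact hf.map_normal (hN H ((hf.map_le_map_iff (hN N le_rfl)).mp hK))

noncomputable def orderIsoIci (hf : IsELIso f) :
    {H : Subgroup G₁ // N ≤ H} ≃o {K : Subgroup G₂ // f N ≤ K} :=
  RelIso.ofSurjective
    (OrderEmbedding.ofMapLEIff (fun H => ⟨f H, (hf.map_le_map_iff (hN N le_rfl)).mpr H.2⟩)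
      fun H K => hf.map_le_map_iff (hN H H.2))
    fun K => by
      obtain ⟨H, hH⟩ := hf.1.2 K
      exact ⟨⟨H, (hf.map_le_map_iff (hN N le_rfl)).mp (hH ▸ K.2)⟩, Subtype.ext hH⟩

end

theorem commutator_le_map_commutator (hf : IsELIso f) (hstar : CondStar G₂) :
    commutator G₂ ≤ f (commutator G₁) := by
  have hD : ∀ H : Subgroup G₁, commutator G₁ ≤ H → H.Normal := fun _ => Normal.of_commutator_le G₁
  set N := f (commutator G₁)
  have : N.Normal := hf.normal_of_map_le hD le_rfl
  have hQ : ∀ S : Subgroup (G₂ ⧸ N), S.Normal := fun S => by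
    rw [← map_comap_eq_self_of_surjective (QuotientGroup.mk'_surjective N) S]
    exact (hf.normal_of_map_le hD (QuotientGroup.le_comap_mk' N S)).map _
      (QuotientGroup.mk'_surjective N)
  by_contra hDN
  have hnc : ∃ a b : G₂ ⧸ N, ¬Commute a b := by
    by_contra! h
    exact hDN (Normal.quotient_commutative_iff_commutator_le.mp ⟨⟨fun a b => h a b⟩⟩)
  obtain ⟨p, hp, hQp⟩ := hstar N ⟨hQ, fun h => hnc.elim fun a ⟨b, hab⟩ => hab (h a b)⟩
  have := Fact.mk hp
  obtain ⟨W, X, Y, hW, hXW, hYW, hXY, hYX⟩ := exists_isCocyclic_not_le_of_isPGroup hQ hQp hnc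
  let Ψ : Subgroup (G₂ ⧸ N) ≃o Subgroup (Abelianization G₁) :=
    ((QuotientGroup.comapMk'OrderIso N).trans (hf.orderIsoIci hD).symm).trans
      (QuotientGroup.comapMk'OrderIso (commutator G₁)).symm
  rcases (hW.map_orderIso Ψ).le_or_le (Ψ.monotone hXW) (Ψ.monotone hYW) with h | h
  exacts [hXY (Ψ.le_iff_le.mp h), hYX (Ψ.le_iff_le.mp h)]

end IsELIso

/-- Corollary (2.2): if `G` satisfies the condition (*) and `f` is an ℰL-automorphism of
`G`, then the derived subgroup `D(G)` is a fixed point of `f`. -/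
theorem eliso_fixes_commutator {G : Type*} [Group G] (hstar : CondStar G)
    (f : Subgroup G → Subgroup G) (hf : IsELIso f) :
    f (commutator G) = commutator G := by
  set e := Equiv.ofBijective f hf.1
  have hle : commutator G ≤ e.symm (commutator G) := hf.symm.commutator_le_map_commutator hstar
  refine le_antisymm ?_ (hf.commutator_le_map_commutator hstar)
  calc f (commutator G) ≤ f (e.symm (commutator G)) := (hf.map_le_map_iff inferInstance).mpr hle
    _ = commutator G := e.apply_symm_apply _
end

section
/- Let Q₈ be the quaternion group of order 8 and D₄ the dihedral group of order 8. Then the lattices of normal subgroups N(Q₈) and N(D₄) are isomorphic as lattices, but there exists no ℰL-isomorphism from Q₈ to D₄. -/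
section
variable {G H : Type*} [Group G] [Group H]

def Finset.IsNormalSubgroup (F : Finset G) : Prop :=
  1 ∈ F ∧ (∀ x ∈ F, ∀ y ∈ F, x * y ∈ F) ∧ (∀ x ∈ F, x⁻¹ ∈ F) ∧ ∀ x ∈ F, ∀ g : G, g * x * g⁻¹ ∈ F

instance [Fintype G] [DecidableEq G] :
    DecidablePred (Finset.IsNormalSubgroup (G := G)) :=
  fun F => inferInstanceAs (Decidable (1 ∈ F ∧ _))

theorem Subgroup.Normal.isNormalSubgroup_toFinset [Finite G] {N : Subgroup G} (hN : N.Normal) :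
    (Set.toFinite (N : Set G)).toFinset.IsNormalSubgroup := by
  simp only [Finset.IsNormalSubgroup, Set.Finite.mem_toFinset, SetLike.mem_coe]
  exact ⟨N.one_mem, fun _ hx _ hy => N.mul_mem hx hy, fun _ hx => N.inv_mem hx,
    fun _ hx g => hN.conj_mem _ hx g⟩

def Finset.IsNormalSubgroup.toSubgroup {F : Finset G} (hF : F.IsNormalSubgroup) : Subgroup G where
  carrier := F
  one_mem' := hF.1
  mul_mem' ha hb := hF.2.1 _ ha _ hb
  inv_mem' := hF.2.2.1 _

theorem Finset.IsNormalSubgroup.toSubgroup_normal {F : Finset G} (hF : F.IsNormalSubgroup) :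
    hF.toSubgroup.Normal :=
  ⟨fun x hx g => hF.2.2.2 x hx g⟩

noncomputable def Subgroup.normalOrderIsoNormalFinset [Finite G] :
    {N : Subgroup G // N.Normal} ≃o {F : Finset G // F.IsNormalSubgroup} where
  toFun N := ⟨_, N.2.isNormalSubgroup_toFinset⟩
  invFun F := ⟨_, F.2.toSubgroup_normal⟩
  left_inv N := by ext; simp [Finset.IsNormalSubgroup.toSubgroup]
  right_inv F := by ext; simp [Finset.IsNormalSubgroup.toSubgroup]
  map_rel_iff' := by simp

def Equiv.normalFinsetOrderIso (e : G ≃ H)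
    (he : ∀ F : Finset G, (F.map e.toEmbedding).IsNormalSubgroup ↔ F.IsNormalSubgroup) :
    {F : Finset G // F.IsNormalSubgroup} ≃o {F : Finset H // F.IsNormalSubgroup} where
  toEquiv := e.finsetCongr.subtypeEquiv fun F => (he F).symm
  map_rel_iff' {F F'} := Finset.map_subset_map (s₁ := F.1) (s₂ := F'.1)

noncomputable def Subgroup.normalOrderIsoOfEquiv [Finite G] [Finite H] (e : G ≃ H)
    (he : ∀ F : Finset G, (F.map e.toEmbedding).IsNormalSubgroup ↔ F.IsNormalSubgroup) :
    {N : Subgroup G // N.Normal} ≃o {N : Subgroup H // N.Normal} :=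
  normalOrderIsoNormalFinset.trans <|
    (e.normalFinsetOrderIso he).trans normalOrderIsoNormalFinset.symm

end

theorem DihedralGroup.eq_of_sr_mem_zpowers_sr {n : ℕ} {i j : ZMod n}
    (h : sr j ∈ Subgroup.zpowers (sr i)) : j = i := by
  obtain ⟨k, hk⟩ := Subgroup.mem_zpowers_iff.mp h
  rw [← zpow_mod_orderOf, orderOf_sr] at hk
  obtain h0 | h1 : k % (2 : ℕ) = 0 ∨ k % (2 : ℕ) = 1 := by omega
  · rw [h0, zpow_zero, one_def] at hk
    cases hk
  · rw [h1, zpow_one] at hk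
    cases hk
    rfl

theorem DihedralGroup.not_normal_zpowers_sr {n : ℕ} (hn : 3 ≤ n) (i : ZMod n) :
    ¬ (Subgroup.zpowers (sr i)).Normal := by
  intro h
  have hconj := h.conj_mem _ (Subgroup.mem_zpowers (sr i)) (r 1)
  rw [r_mul_sr, inv_r, sr_mul_r] at hconj
  have h2 : ((2 : ℕ) : ZMod n) = 0 := by
    have := eq_of_sr_mem_zpowers_sr hconj
    push_cast
    linear_combination -this
  rw [ZMod.natCast_eq_zero_iff] at h2
  have := Nat.le_of_dvd (by norm_num) h2
  omega

theorem IsELIso.normal_of_forall_normal {G₁ G₂ : Type*} [Group G₁] [Group G₂]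
    {f : Subgroup G₁ → Subgroup G₂} (hf : IsELIso f) (h : ∀ H : Subgroup G₁, H.Normal)
    (K : Subgroup G₂) : K.Normal := by
  obtain ⟨H, rfl⟩ := hf.1.2 K
  rw [← @Subgroup.normalCore_eq_self _ _ H (h H), hf.2.1]
  exact Subgroup.normalCore_normal _

theorem Subgroup.normal_of_conj_eq_or_eq_inv {G : Type*} [Group G]
    (hG : ∀ g x : G, g * x * g⁻¹ = x ∨ g * x * g⁻¹ = x⁻¹) (H : Subgroup G) : H.Normal where
  conj_mem x hx g := by
    rcases hG g x with h | h <;> rw [h]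
    exacts [hx, H.inv_mem hx]

namespace QuaternionGroup
open DihedralGroup

def equivDihedralGroup (n : ℕ) : QuaternionGroup n ≃ DihedralGroup (2 * n) where
  toFun
    | a i => r i
    | xa i => sr i
  invFun
    | r i => a i
    | sr i => xa i
  left_inv := by rintro (i | i) <;> rfl
  right_inv := by rintro (i | i) <;> rfl

set_option maxRecDepth 4000 in
theorem isNormalSubgroup_map_equivDihedralGroup_iff (F : Finset (QuaternionGroup 2)) :
    (F.map (equivDihedralGroup 2).toEmbedding).IsNormalSubgroup ↔ F.IsNormalSubgroup := by
  revert F; decide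

theorem conj_eq_or_eq_inv (g x : QuaternionGroup 2) : g * x * g⁻¹ = x ∨ g * x * g⁻¹ = x⁻¹ := by
  revert g x; decide

end QuaternionGroup

/-- The quaternion group `Q₈` and the dihedral group `D₄` of order 8 have isomorphic
lattices of normal subgroups, but they are not ℰL-isomorphic. -/
theorem q8_d4_normal_iso_not_eliso :
    Nonempty ({N : Subgroup (QuaternionGroup 2) // N.Normal} ≃o
              {N : Subgroup (DihedralGroup 4) // N.Normal}) ∧
    ¬ ∃ f : Subgroup (QuaternionGroup 2) → Subgroup (DihedralGroup 4), IsELIso f := by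
  refine ⟨⟨Subgroup.normalOrderIsoOfEquiv (QuaternionGroup.equivDihedralGroup 2)
    QuaternionGroup.isNormalSubgroup_map_equivDihedralGroup_iff⟩, ?_⟩
  rintro ⟨f, hf⟩
  have hQ₈ := Subgroup.normal_of_conj_eq_or_eq_inv QuaternionGroup.conj_eq_or_eq_inv
  exact DihedralGroup.not_normal_zpowers_sr (by norm_num) 0 (hf.normal_of_forall_normal hQ₈ _)
end

section
/- Let S₃ be the symmetric group of degree 3. Then the group Aut⁰_ℰ(L(S₃)) of all ℰL-automorphisms of S₃ that fix every normal subgroup of S₃, with composition as group operation, is isomorphic to S₃. -/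
/-- `Aut⁰_ℰ(L(G))`: the group (under composition) of all ℰL-automorphisms of `G` that
fix every normal subgroup of `G`, as a subgroup of the symmetric group on `L(G)`. -/
def ELAut0 (G : Type*) [Group G] : Subgroup (Equiv.Perm (Subgroup G)) where
  carrier := {f : Equiv.Perm (Subgroup G) |
    (∀ H : Subgroup G, f H.normalCore = (f H).normalCore) ∧
    (∀ H K : Subgroup G,
      f (H.normalCore ⊓ K.normalCore) = (f H).normalCore ⊓ (f K).normalCore) ∧
    (∀ H K : Subgroup G,
      f (H.normalCore ⊔ K.normalCore) = (f H).normalCore ⊔ (f K).normalCore) ∧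
    (∀ N : Subgroup G, N.Normal → f N = N)}
  one_mem' := by simp
  mul_mem' := by
    rintro f g ⟨hf1, hf2, hf3, hf4⟩ ⟨hg1, hg2, hg3, hg4⟩
    refine ⟨fun H => ?_, fun H K => ?_, fun H K => ?_, fun N hN => ?_⟩
    · simp [Equiv.Perm.mul_apply, hg1, hf1]
    · simp [Equiv.Perm.mul_apply, hg2, hf2]
    · simp [Equiv.Perm.mul_apply, hg3, hf3]
    · simp [Equiv.Perm.mul_apply, hg4 _ hN, hf4 _ hN]
  inv_mem' := by
    rintro f ⟨hf1, hf2, hf3, hf4⟩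
    refine ⟨fun H => ?_, fun H K => ?_, fun H K => ?_, fun N hN => ?_⟩
    · apply f.injective; simp [hf1, Equiv.apply_symm_apply]
    · apply f.injective; simp [hf2, Equiv.apply_symm_apply]
    · apply f.injective; simp [hf3, Equiv.apply_symm_apply]
    · apply f.injective; simp [hf4 _ hN, Equiv.apply_symm_apply]


/-! A permutation of `L(S₃)` fixing the normal subgroups automatically commutes with normal
cores: the non-normal subgroups of `S₃` are its three subgroups of order 2, all core-free. As
cores, and their meets and joins, are normal, such a permutation is an ℰL-automorphism. Hence
`Aut⁰_ℰ(L(S₃))` is the full symmetric group on the three subgroups of order 2. -/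

open Equiv Subgroup

section

variable {G : Type*} [Group G]

namespace ELAut0

theorem apply_of_normal (f : ELAut0 G) {N : Subgroup G} (hN : N.Normal) :
    (f : Perm (Subgroup G)) N = N :=
  f.2.2.2.2 N hN

theorem normal_apply_iff (f : ELAut0 G) (H : Subgroup G) :
    ((f : Perm (Subgroup G)) H).Normal ↔ H.Normal := by
  refine ⟨fun h => ?_, fun h => by rwa [apply_of_normal f h]⟩
  rwa [← (f : Perm (Subgroup G)).injective (apply_of_normal f h)]

theorem mem_of_normalCore_apply_eq (f : Perm (Subgroup G))
    (hfix : ∀ N : Subgroup G, N.Normal → f N = N)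
    (hcore : ∀ H : Subgroup G, (f H).normalCore = H.normalCore) : f ∈ ELAut0 G :=
  ⟨fun H => by rw [hcore, hfix _ inferInstance],
    fun H K => by rw [hcore, hcore, hfix _ (normal_inf_normal _ _)],
    fun H K => by rw [hcore, hcore, hfix _ (sup_normal _ _)], hfix⟩

open scoped Classical in
theorem ofSubtype_mem (hcore : ∀ H : Subgroup G, ¬H.Normal → H.normalCore = ⊥)
    (σ : Perm {H : Subgroup G // ¬H.Normal}) : Perm.ofSubtype σ ∈ ELAut0 G := by
  refine mem_of_normalCore_apply_eq _ (fun N hN => σ.ofSubtype_apply_of_not_mem (not_not.2 hN))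
    fun H => ?_
  by_cases hH : H.Normal
  · rw [σ.ofSubtype_apply_of_not_mem (not_not.2 hH)]
  · rw [σ.ofSubtype_apply_of_mem hH, hcore _ (σ ⟨H, hH⟩).2, hcore _ hH]

open scoped Classical in
noncomputable def mulEquivPermNonNormal
    (hcore : ∀ H : Subgroup G, ¬H.Normal → H.normalCore = ⊥) :
    ELAut0 G ≃* Perm {H : Subgroup G // ¬H.Normal} :=
  (MulEquiv.ofBijective (Perm.ofSubtype.codRestrict (ELAut0 G) (ofSubtype_mem hcore))
    ⟨fun _ _ h => Perm.ofSubtype_injective (congrArg Subtype.val h), fun f =>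
      ⟨Perm.subtypePerm f fun H => (normal_apply_iff f H).not,
        Subtype.ext <| Perm.ofSubtype_subtypePerm _
          fun _ hne hN => hne (apply_of_normal f hN)⟩⟩).symm

end ELAut0

theorem normalCore_eq_bot_of_prime_card {H : Subgroup G} (hp : (Nat.card H).Prime)
    (hH : ¬H.Normal) : H.normalCore = ⊥ := by
  have := Nat.finite_of_card_ne_zero hp.ne_zero
  rcases (Nat.dvd_prime hp).1 (card_dvd_of_le H.normalCore_le) with h | h
  · exact card_eq_one.1 h
  · have := eq_of_le_of_card_ge H.normalCore_le h.ge
    exact absurd (this ▸ H.normalCore_normal) hH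

theorem card_eq_two_of_not_normal {p : ℕ} (hp : p.Prime) (hG : Nat.card G = 2 * p)
    {H : Subgroup G} (hH : ¬H.Normal) : Nat.card H = 2 := by
  have hindex := H.card_mul_index
  rw [hG] at hindex
  obtain ⟨a, b, ha, hb, hab⟩ := Nat.dvd_mul.1 (hG ▸ card_subgroup_dvd_card H)
  rcases (Nat.dvd_prime Nat.prime_two).1 ha with rfl | rfl <;>
    rcases (Nat.dvd_prime hp).1 hb with rfl | rfl <;> rw [← hab] at hindex ⊢
  -- the case `|H| = 2 * 1` is closed by the `rw`
  · exact absurd (card_eq_one.1 hab.symm ▸ normal_bot) hH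
  · refine absurd (normal_of_index_eq_two ?_) hH
    rw [one_mul, mul_comm] at hindex
    exact Nat.eq_of_mul_eq_mul_right hp.pos hindex
  · refine absurd ((index_eq_one (H := H)).1 ?_ ▸ normal_top) hH
    exact (Nat.mul_eq_left (Nat.mul_ne_zero two_ne_zero hp.ne_zero)).1 hindex

theorem normalCore_eq_bot_of_not_normal {p : ℕ} (hp : p.Prime) (hG : Nat.card G = 2 * p)
    {H : Subgroup G} (hH : ¬H.Normal) : H.normalCore = ⊥ :=
  normalCore_eq_bot_of_prime_card (card_eq_two_of_not_normal hp hG hH ▸ Nat.prime_two) hH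

theorem mem_zpowers_iff_of_mul_self {g x : G} (hg : g * g = 1) :
    x ∈ zpowers g ↔ x = 1 ∨ x = g := by
  refine ⟨fun hx => ?_, by rintro (rfl | rfl) <;> simp⟩
  obtain ⟨k, rfl⟩ := mem_zpowers_iff.1 hx
  rw [zpow_eq_zpow_emod' k (n := 2) (by rwa [pow_two])]
  rcases Int.emod_two_eq k with h | h <;> simp [h]

noncomputable def involutionsEquivCardTwo :
    {g : G // g ≠ 1 ∧ g * g = 1} ≃ {H : Subgroup G // Nat.card H = 2} := by
  refine Equiv.ofBijective (fun g => ⟨zpowers g.1, ?_⟩) ⟨?_, ?_⟩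
  · rw [Nat.card_zpowers]
    exact orderOf_eq_prime (by rw [pow_two]; exact g.2.2) g.2.1
  · rintro ⟨g, _, hg⟩ ⟨g', hg'1, _⟩ hgg'
    have : g' ∈ zpowers g := by
      rw [show zpowers g = zpowers g' from congrArg Subtype.val hgg']
      exact mem_zpowers g'
    exact Subtype.ext (((mem_zpowers_iff_of_mul_self hg).1 this).resolve_left hg'1).symm
  · rintro ⟨H, hH⟩
    have := Nat.finite_of_card_ne_zero (hH ▸ two_ne_zero : Nat.card H ≠ 0)
    have : Nontrivial H := Finite.one_lt_card_iff_nontrivial.1 (by omega)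
    obtain ⟨g, hgH, hg1⟩ := H.exists_ne_one_of_nontrivial
    have hsq : g * g = 1 := by
      simpa [pow_two, hH] using congrArg Subtype.val (pow_card_eq_one' (x := (⟨g, hgH⟩ : H)))
    refine ⟨⟨g, hg1, hsq⟩, Subtype.ext (eq_of_le_of_card_ge (zpowers_le.2 hgH) ?_)⟩
    rw [hH, Nat.card_zpowers, orderOf_eq_prime (by rw [pow_two]; exact hsq) hg1]

end

local notation "S3" => Perm (Fin 3)

theorem card_perm_fin_three : Nat.card S3 = 2 * 3 := by
  rw [Nat.card_perm, Nat.card_fin]; rfl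

theorem not_normal_zpowers_of_mul_self_perm_fin_three {g : S3} (hg1 : g ≠ 1) (hg : g * g = 1) :
    ¬(zpowers g).Normal := by
  obtain ⟨h, hconj⟩ : ∃ h : S3, h * g * h⁻¹ ≠ g := by revert g; decide
  intro hN
  rcases (mem_zpowers_iff_of_mul_self hg).1 (hN.conj_mem g (mem_zpowers g) h) with h1 | hg'
  · exact hg1 (conj_eq_one_iff.1 h1)
  · exact hconj hg'

noncomputable def nonNormalSubgroupsPermFinThreeEquivFin :
    {H : Subgroup S3 // ¬H.Normal} ≃ Fin 3 :=
  (Equiv.subtypeEquivRight fun H =>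
      ⟨card_eq_two_of_not_normal Nat.prime_three card_perm_fin_three, fun hH => by
        obtain ⟨⟨g, hg1, hg⟩, hgH⟩ := involutionsEquivCardTwo.surjective ⟨H, hH⟩
        rw [← show zpowers g = H from congrArg Subtype.val hgH]
        exact not_normal_zpowers_of_mul_self_perm_fin_three hg1 hg⟩).trans
    (involutionsEquivCardTwo.symm.trans (Fintype.equivFinOfCardEq (by decide)))

/-- Example 1 (2.2): for the symmetric group `S₃` of degree 3, the group
`Aut⁰_ℰ(L(S₃))` of ℰL-automorphisms of `S₃` fixing every normal subgroup is
isomorphic to `S₃`. -/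
theorem elaut0_s3_iso_s3 :
    Nonempty (ELAut0 (Equiv.Perm (Fin 3)) ≃* Equiv.Perm (Fin 3)) :=
  ⟨(ELAut0.mulEquivPermNonNormal fun _ =>
      normalCore_eq_bot_of_not_normal Nat.prime_three card_perm_fin_three).trans
    (permCongrHom nonNormalSubgroupsPermFinThreeEquivFin)⟩
end
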